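/- arXiv:1912.09804 — 10 statements merged into one kernel-verified Lean document; each statement's English description precedes it below -/
import Mathlib

section
/- Let C be an [n,k]_q linear code with generator matrix G and associated multiset of points 𝒫 in 𝔽_q^k. A nonzero codeword c ∈ C is minimal if and only if the linear span of the points of 𝒫 contained in the hyperplane H_c equals H_c, i.e., if and only if dim ⟨𝒫 ∩ H_c⟩ = k − 1. -/
/-!
A codeword `m'G` has support inside that of `c = mG` exactly when the hyperplane `H_{m'}`
contains every point of `𝒫` on `H_c`, i.e. contains `S = ⟨𝒫 ∩ H_c⟩`. If `S = H_c` this forces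
`H_{m'} = H_c`, hence equal supports. If `S ⊊ H_c`, pick `x ∈ H_c \ S` and a column `G_i ∉ H_c`;
then `x ∉ S ⊔ ⟨G_i⟩`, and a linear form vanishing on `S ⊔ ⟨G_i⟩` but not at `x` gives a nonzero
codeword whose support misses `i`, so is strictly smaller.
-/

open scoped Classical
open Matrix

/-- The support of a word. -/
def wordSupp {F : Type} [Field F] {n : ℕ} (c : Fin n → F) : Set (Fin n) :=
  {i | c i ≠ 0}

/-- A nonzero codeword of `C` is minimal if no nonzero codeword of `C` has support
properly contained in its support. -/
def IsMinimalCodeword {F : Type} [Field F] {n : ℕ}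
    (C : Submodule F (Fin n → F)) (c : Fin n → F) : Prop :=
  c ∈ C ∧ c ≠ 0 ∧ ∀ c' ∈ C, c' ≠ 0 → ¬ wordSupp c' ⊂ wordSupp c

/-- The number of minimal codewords of `C`, counted up to equivalence (i.e. up to
multiplication by a nonzero scalar). -/
noncomputable def numMinimal {F : Type} [Field F] {n : ℕ}
    (C : Submodule F (Fin n → F)) : ℕ :=
  Nat.card (Quot (fun c c' : {c : Fin n → F // IsMinimalCodeword C c} =>
    ∃ a : Fˣ, a • c.1 = c'.1))

/-- A code is projective if no coordinate vanishes identically and no two distinct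
coordinates agree up to a nonzero scalar factor on all of `C`. -/
def IsProjective {F : Type} [Field F] {n : ℕ} (C : Submodule F (Fin n → F)) : Prop :=
  (∀ i : Fin n, ∃ c ∈ C, c i ≠ 0) ∧
  ∀ i j : Fin n, i ≠ j → ¬ ∃ a : F, a ≠ 0 ∧ ∀ c ∈ C, c j = a * c i

/-- `mMin F n k` : the minimum of `numMinimal C` over all projective `[n,k]` codes over `F`. -/
noncomputable def mMin (F : Type) [Field F] [Fintype F] (n k : ℕ) : ℕ :=
  sInf {m | ∃ C : Submodule F (Fin n → F),
    Module.finrank F C = k ∧ IsProjective C ∧ numMinimal C = m}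

/-- `alphaQ F k r` : minimum cardinality of a set `S` of points (1-dimensional subspaces)
of `F^k` for which there are `r` distinct hyperplanes `H i` and codimension-2 subspaces
`U i ≤ H i` such that every point lying on some `H i` but not on `U i` belongs to `S`. -/
noncomputable def alphaQ (F : Type) [Field F] [Fintype F] (k r : ℕ) : ℕ :=
  sInf {m | ∃ S : Set (Submodule F (Fin k → F)), S.ncard = m ∧
    ∃ H U : Fin r → Submodule F (Fin k → F),
      Function.Injective H ∧
      (∀ i, Module.finrank F (H i) = k - 1) ∧
      (∀ i, Module.finrank F (U i) = k - 2) ∧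
      (∀ i, U i ≤ H i) ∧
      ∀ P : Submodule F (Fin k → F), Module.finrank F P = 1 →
        (∃ i, P ≤ H i ∧ ¬ P ≤ U i) → P ∈ S}

/-- The minimum Hamming weight of a code. -/
noncomputable def minDist {F : Type} [Field F] {n : ℕ} (C : Submodule F (Fin n → F)) : ℕ :=
  sInf {w | ∃ c ∈ C, c ≠ 0 ∧ (wordSupp c).ncard = w}

/-- The support of a subcode. -/
def subcodeSupp {F : Type} [Field F] {n : ℕ} (D : Submodule F (Fin n → F)) : Set (Fin n) :=
  {i | ∃ v ∈ D, v i ≠ 0}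

/-- An `l`-dimensional subcode `D` of `C` is support-minimal if no `l`-dimensional subcode
of `C` has support properly contained in `supp D`. -/
def IsSupportMinimal {F : Type} [Field F] {n : ℕ}
    (C D : Submodule F (Fin n → F)) (l : ℕ) : Prop :=
  D ≤ C ∧ Module.finrank F D = l ∧
  ∀ D' : Submodule F (Fin n → F), D' ≤ C → Module.finrank F D' = l →
    ¬ subcodeSupp D' ⊂ subcodeSupp D

/-- The `l`-th generalized Hamming weight of `C`. -/
noncomputable def genWeight {F : Type} [Field F] {n : ℕ}
    (C : Submodule F (Fin n → F)) (l : ℕ) : ℕ :=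
  sInf {w | ∃ D : Submodule F (Fin n → F), D ≤ C ∧ Module.finrank F D = l ∧
    (subcodeSupp D).ncard = w}

/-- The number of support-minimal `l`-dimensional subcodes of `C`. -/
noncomputable def numSupportMinimal {F : Type} [Field F] {n : ℕ}
    (C : Submodule F (Fin n → F)) (l : ℕ) : ℕ :=
  Nat.card {D : Submodule F (Fin n → F) // IsSupportMinimal C D l}

/-- The Gaussian binomial coefficient `[k choose l]_q`. -/
def gaussBinom (q k l : ℕ) : ℕ :=
  (∏ i ∈ Finset.range l, (q ^ (k - i) - 1)) / (∏ i ∈ Finset.range l, (q ^ (i + 1) - 1))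

/-- `alphaL F k l r` : the analogue of `alphaQ` for codimension `l`. -/
noncomputable def alphaL (F : Type) [Field F] [Fintype F] (k l r : ℕ) : ℕ :=
  sInf {m | ∃ S : Set (Submodule F (Fin k → F)), S.ncard = m ∧
    ∃ W U : Fin r → Submodule F (Fin k → F),
      Function.Injective W ∧
      (∀ i, Module.finrank F (W i) = k - l) ∧
      (∀ i, Module.finrank F (U i) = k - (l + 1)) ∧
      (∀ i, U i ≤ W i) ∧
      ∀ P : Submodule F (Fin k → F), Module.finrank F P = 1 →
        (∃ i, P ≤ W i ∧ ¬ P ≤ U i) → P ∈ S}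

open Module Submodule

theorem LinearMap.injective_of_finrank_range_eq {K V W : Type*} [DivisionRing K]
    [AddCommGroup V] [Module K V] [AddCommGroup W] [Module K W] [FiniteDimensional K V]
    {f : V →ₗ[K] W} (h : finrank K (LinearMap.range f) = finrank K V) : Function.Injective f := by
  have := f.finrank_range_add_finrank_ker
  rw [← LinearMap.ker_eq_bot, ← finrank_eq_zero]
  omega

namespace Module.Dual

variable {K V ι : Type*} [Field K] [AddCommGroup V] [Module K V]

/-- For the points `v i` of `𝒫` and a linear form `f`, `evalSupport v f` is the support of the
codeword `(f (v i))ᵢ` and `spanOnKer v f` is `⟨𝒫 ∩ ker f⟩`. -/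
def evalSupport (v : ι → V) (f : Dual K V) : Set ι :=
  {i | f (v i) ≠ 0}

def spanOnKer (v : ι → V) (f : Dual K V) : Submodule K V :=
  span K {x | (∃ i, x = v i) ∧ f x = 0}

variable {v : ι → V} {f g : Dual K V}

theorem evalSupport_subset_iff :
    evalSupport v g ⊆ evalSupport v f ↔ spanOnKer v f ≤ LinearMap.ker g := by
  simp only [evalSupport, spanOnKer, span_le, Set.subset_def, Set.mem_ofPred_eq, SetLike.mem_coe,
    LinearMap.mem_ker]
  constructor
  · rintro h _ ⟨⟨i, rfl⟩, hfi⟩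
    exact not_not.1 (mt (h i) (not_not.2 hfi))
  · intro h i hgi hfi
    exact hgi (h _ ⟨⟨i, rfl⟩, hfi⟩)

theorem spanOnKer_le_ker : spanOnKer v f ≤ LinearMap.ker f :=
  evalSupport_subset_iff.1 subset_rfl

theorem ker_eq_of_ker_le (hf : f ≠ 0) (hg : g ≠ 0) (h : LinearMap.ker f ≤ LinearMap.ker g) :
    LinearMap.ker f = LinearMap.ker g :=
  (((LinearMap.isCoatom_ker_of_surjective (LinearMap.surjective hf)).le_iff).1 h).resolve_left
    (by simpa [LinearMap.ker_eq_top] using hg) |>.symm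

theorem notMem_sup_span_singleton {W : Submodule K V} {x y : V} (hW : W ≤ LinearMap.ker f)
    (hxf : f x = 0) (hxW : x ∉ W) (hyf : f y ≠ 0) : x ∉ W ⊔ K ∙ y := by
  rintro hx
  obtain ⟨w, hw, z, hz, rfl⟩ := mem_sup.1 hx
  obtain ⟨t, rfl⟩ := mem_span_singleton.1 hz
  have hfw : f w = 0 := hW hw
  have ht : t = 0 := by
    simpa [hfw, hyf] using hxf
  exact hxW (by simpa [ht] using hw)

theorem exists_evalSupport_ssubset {i : ι} (hi : f (v i) ≠ 0)
    (hW : spanOnKer v f ≠ LinearMap.ker f) :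
    ∃ g : Dual K V, g ≠ 0 ∧ evalSupport v g ⊂ evalSupport v f := by
  obtain ⟨x, hxf, hxW⟩ := SetLike.exists_of_lt (lt_of_le_of_ne spanOnKer_le_ker hW)
  obtain ⟨g, hgx, hg⟩ := exists_dual_map_eq_bot_of_notMem
    (notMem_sup_span_singleton spanOnKer_le_ker hxf hxW hi) inferInstance
  rw [← LinearMap.le_ker_iff_map, sup_le_iff, span_singleton_le_iff_mem, LinearMap.mem_ker] at hg
  refine ⟨g, fun h => hgx (by simp [h]), ?_⟩
  exact (evalSupport_subset_iff.2 hg.1).ssubset_of_not_subset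
    fun h => h (show i ∈ evalSupport v f from hi) hg.2

theorem forall_not_evalSupport_ssubset_iff (hf : (evalSupport v f).Nonempty) :
    (∀ g : Dual K V, g ≠ 0 → ¬ evalSupport v g ⊂ evalSupport v f) ↔
      spanOnKer v f = LinearMap.ker f := by
  obtain ⟨i, hi⟩ := hf
  refine ⟨fun h => by_contra fun hW => ?_, fun hW g hg hgf => ?_⟩
  · obtain ⟨g, hg, hgf⟩ := exists_evalSupport_ssubset hi hW
    exact h g hg hgf
  · have hf0 : f ≠ 0 := fun h => hi (by simp [h])
    have hker := ker_eq_of_ker_le hf0 hg (hW ▸ evalSupport_subset_iff.1 hgf.subset)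
    refine hgf.not_subset fun j hj => ?_
    simpa [evalSupport, ← LinearMap.mem_ker, hker] using hj

theorem eq_ker_iff_finrank_eq [FiniteDimensional K V] {W : Submodule K V} (hf : f ≠ 0)
    (hW : W ≤ LinearMap.ker f) : W = LinearMap.ker f ↔ finrank K W = finrank K V - 1 := by
  have := finrank_ker_add_one_of_ne_zero hf
  refine ⟨fun h => ?_, fun h => eq_of_le_of_finrank_eq hW (by omega)⟩
  rw [h]
  omega

end Module.Dual

open Module.Dual

theorem Matrix.isMinimalCodeword_vecMul_iff {F : Type} [Field F] {n k : ℕ}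
    {G : Matrix (Fin k) (Fin n) F} (hG : Function.Injective G.vecMulLinear) {m : Fin k → F}
    (hm : m ≠ 0) :
    IsMinimalCodeword (LinearMap.range G.vecMulLinear) (vecMul m G) ↔
      ∀ g : Dual F (Fin k → F), g ≠ 0 →
        ¬ evalSupport (fun i => Gᵀ i) g ⊂
          evalSupport (fun i => Gᵀ i) (dotProductEquiv F (Fin k) m) := by
  have hne {m' : Fin k → F} : vecMul m' G ≠ 0 ↔ m' ≠ 0 :=
    map_ne_zero_iff G.vecMulLinear hG
  constructor
  · rintro ⟨-, -, h⟩ g hg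
    obtain ⟨m', rfl⟩ := (dotProductEquiv F (Fin k)).surjective g
    exact h _ ⟨m', rfl⟩ (hne.2 ((dotProductEquiv F (Fin k)).map_ne_zero_iff.1 hg))
  · refine fun h => ⟨⟨m, rfl⟩, hne.2 hm, ?_⟩
    rintro _ ⟨m', rfl⟩ hc
    exact h _ ((dotProductEquiv F (Fin k)).map_ne_zero_iff.2 (hne.1 hc))

theorem statement_0_general {F : Type} [Field F] {n k : ℕ}
    (G : Matrix (Fin k) (Fin n) F)
    (hrank : Module.finrank F (LinearMap.range G.vecMulLinear) = k)
    (m : Fin k → F) (hm : m ≠ 0) :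
    IsMinimalCodeword (LinearMap.range G.vecMulLinear) (Matrix.vecMul m G) ↔
      Module.finrank F (Submodule.span F
        {x : Fin k → F | (∃ i : Fin n, x = Gᵀ i) ∧ dotProduct m x = 0}) = k - 1 := by
  have hG : Function.Injective G.vecMulLinear :=
    LinearMap.injective_of_finrank_range_eq (hrank.trans (finrank_fin_fun F).symm)
  have hf : dotProductEquiv F (Fin k) m ≠ 0 := (dotProductEquiv F (Fin k)).map_ne_zero_iff.2 hm
  have hc : (evalSupport (fun i => Gᵀ i) (dotProductEquiv F (Fin k) m)).Nonempty :=
    Function.ne_iff.1 (show vecMul m G ≠ 0 from (map_ne_zero_iff G.vecMulLinear hG).2 hm)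
  rw [G.isMinimalCodeword_vecMul_iff hG hm, forall_not_evalSupport_ssubset_iff hc,
    eq_ker_iff_finrank_eq hf spanOnKer_le_ker, finrank_fin_fun]
  rfl

/-- A nonzero codeword `c = m ᵥ* G` of the `[n,k]_q` code generated by `G`
is minimal iff the span of the points of the associated multiset `𝒫` (the columns of `G`)
lying on the hyperplane `H_c = {x | m ⬝ᵥ x = 0}` has dimension `k - 1`,
i.e. equals `H_c`. -/
theorem statement_0 {F : Type} [Field F] [Fintype F] {n k : ℕ}
    (G : Matrix (Fin k) (Fin n) F)
    (hrank : Module.finrank F (LinearMap.range G.vecMulLinear) = k)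
    (m : Fin k → F) (hm : m ≠ 0) :
    IsMinimalCodeword (LinearMap.range G.vecMulLinear) (Matrix.vecMul m G) ↔
      Module.finrank F (Submodule.span F
        {x : Fin k → F | (∃ i : Fin n, x = Gᵀ i) ∧ dotProduct m x = 0}) = k - 1 :=
  statement_0_general G hrank m hm
end

section
/- Let C be an [n,k]_q linear code with minimum Hamming weight d. If c ∈ C is a minimal codeword, then d ≤ wt(c) ≤ n − k + 1. -/
open scoped Classical
open Matrix

section

variable {F ι : Type*} [Field F] [Fintype ι]

/-- Evaluation at `i₀` embeds the kernel of the restriction to `Sᶜ` into `F`, so rank–nullity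
gives `dim C ≤ |Sᶜ| + 1`. -/
theorem finrank_le_ncard_compl_add_one (C : Submodule F (ι → F)) (S : Set ι) (i₀ : ι)
    (h : ∀ v ∈ C, (∀ i ∉ S, v i = 0) → v i₀ = 0 → v = 0) :
    Module.finrank F C ≤ Sᶜ.ncard + 1 := by
  let restrict : C →ₗ[F] (↥Sᶜ → F) :=
    (LinearMap.funLeft F F ((↑) : ↥Sᶜ → ι)).comp C.subtype
  let evalKer : LinearMap.ker restrict →ₗ[F] F :=
    (LinearMap.proj i₀).comp (C.subtype.comp (LinearMap.ker restrict).subtype)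
  have evalKer_injective : Function.Injective evalKer := by
    rw [injective_iff_map_eq_zero]
    intro v hv
    have hvanish : ∀ i ∉ S, (v : ι → F) i = 0 := fun i hi =>
      congrFun (LinearMap.mem_ker.mp v.2) ⟨i, hi⟩
    exact Subtype.ext (Subtype.ext (h _ (v : C).2 hvanish hv))
  have hker : Module.finrank F (LinearMap.ker restrict) ≤ 1 := by
    simpa using LinearMap.finrank_le_finrank_of_injective evalKer_injective
  have hrange : Module.finrank F (LinearMap.range restrict) ≤ Sᶜ.ncard :=
    (Submodule.finrank_le _).trans_eq <| by
      rw [Module.finrank_fintype_fun_eq_card, ← Nat.card_eq_fintype_card, Nat.card_coe_set_eq]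
  have rank_nullity := LinearMap.finrank_range_add_finrank_ker restrict
  omega

end

theorem IsMinimalCodeword.eq_zero_of_vanishing {F : Type} [Field F] {n : ℕ}
    {C : Submodule F (Fin n → F)} {c : Fin n → F} (hc : IsMinimalCodeword C c)
    {v : Fin n → F} (hv : v ∈ C) (hvanish : ∀ i ∉ wordSupp c, v i = 0)
    {i₀ : Fin n} (hi₀ : i₀ ∈ wordSupp c) (hvi₀ : v i₀ = 0) : v = 0 := by
  by_contra hv0
  refine hc.2.2 v hv hv0 ⟨fun i hi => ?_, fun hsub => hsub hi₀ hvi₀⟩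
  by_contra hic
  exact hi (hvanish i hic)

theorem statement_1_general {F : Type} [Field F] {n k : ℕ}
    (C : Submodule F (Fin n → F)) (hk : Module.finrank F C = k)
    (c : Fin n → F) (hc : IsMinimalCodeword C c) :
    minDist C ≤ (wordSupp c).ncard ∧ (wordSupp c).ncard ≤ n - k + 1 := by
  refine ⟨Nat.sInf_le ⟨c, hc.1, hc.2.1, rfl⟩, ?_⟩
  obtain ⟨i₀, hi₀⟩ : ∃ i, c i ≠ 0 := Function.ne_iff.mp hc.2.1
  have hdim := finrank_le_ncard_compl_add_one C (wordSupp c) i₀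
    fun v hv hvanish hvi₀ => hc.eq_zero_of_vanishing hv hvanish hi₀ hvi₀
  have hcard := Set.ncard_add_ncard_compl (wordSupp c)
  rw [Nat.card_eq_fintype_card, Fintype.card_fin] at hcard
  omega

/-- if `c` is a minimal codeword of an `[n,k]_q` code `C` with minimum
Hamming weight `d`, then `d ≤ wt(c) ≤ n - k + 1`. -/
theorem statement_1 {F : Type} [Field F] [Fintype F] {n k : ℕ}
    (C : Submodule F (Fin n → F)) (hk : Module.finrank F C = k)
    (c : Fin n → F) (hc : IsMinimalCodeword C c) :
    minDist C ≤ (wordSupp c).ncard ∧ (wordSupp c).ncard ≤ n - k + 1 :=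
  statement_1_general C hk c hc
end

section
/- For every [n,k]_q linear code C with k ≥ 1, the number of minimal codewords counted up to equivalence satisfies M(C) ≤ C(n, k−1) (the binomial coefficient n choose k−1). -/
/-!
A minimal codeword `c` is determined up to a scalar by its zero set `Z`: the codewords vanishing
on `Z` are exactly the multiples of `c`. So the coordinate functionals indexed by `Z` span a
hyperplane of the dual of `C`, and a basis of that hyperplane chosen among them is a set `T ⊆ Z`
of `k - 1` coordinates on which only the multiples of `c` vanish. Since `T` recovers the line
through `c`, the class of `c` is sent injectively to a `(k - 1)`-subset of the `n` coordinates.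
-/

open scoped Classical
open Matrix

open Module Submodule

section LinearAlgebra

variable {K V ι : Type*} [Field K] [AddCommGroup V] [Module K V] [FiniteDimensional K V]

theorem exists_finset_subset_card_eq_finrank_span_image (v : ι → V) (S : Set ι) :
    ∃ T : Finset ι, ↑T ⊆ S ∧ T.card = finrank K (span K (v '' S)) ∧
      span K (v '' T) = span K (v '' S) := by
  obtain ⟨b, hbS, -, hSb, hli⟩ :=
    exists_linearIndepOn_extension (linearIndepOn_empty K v) (Set.empty_subset S)
  have : Finite b := hli.finite_of_isNoetherian
  have hspan : span K (v '' b) = span K (v '' S) :=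
    le_antisymm (span_mono (Set.image_mono hbS)) (span_le.mpr hSb)
  refine ⟨(Set.toFinite b).toFinset, by simpa using hbS, ?_, by simpa using hspan⟩
  have : Fintype b := Fintype.ofFinite b
  rw [← hspan, Set.image_eq_range, finrank_span_eq_card hli, Set.Finite.card_toFinset]

end LinearAlgebra

section MinimalCodewords

variable {F : Type} [Field F] {n : ℕ} {C : Submodule F (Fin n → F)} {c x : Fin n → F}

theorem IsMinimalCodeword.mem_span_singleton_of_wordSupp_subset (hc : IsMinimalCodeword C c)
    (hx : x ∈ C) (hxc : wordSupp x ⊆ wordSupp c) : x ∈ F ∙ c := by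
  obtain ⟨hcC, hc0, hmin⟩ := hc
  obtain ⟨i, hci⟩ : ∃ i, c i ≠ 0 := Function.ne_iff.mp hc0
  set y := x - (x i / c i) • c
  have hyi : y i = 0 := by simp [y, hci]
  have hyc : wordSupp y ⊆ wordSupp c := fun j hj hcj => hj <| by
    have : x j = 0 := by_contra fun hxj => hxc hxj hcj
    simp [y, this, hcj]
  have hy : y = 0 := by_contra fun hy0 =>
    hmin y (C.sub_mem hx (C.smul_mem _ hcC)) hy0 (ssubset_of_subset_not_subset hyc
      fun hcy => hcy hci hyi)
  exact mem_span_singleton.mpr ⟨x i / c i, (sub_eq_zero.mp hy).symm⟩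

theorem IsMinimalCodeword.exists_finset_forall_eq_zero_iff_mem_span_singleton
    (hc : IsMinimalCodeword C c) :
    ∃ T : Finset (Fin n), T.card + 1 = finrank F C ∧
      ∀ x ∈ C, (∀ i ∈ T, x i = 0) ↔ x ∈ F ∙ c := by
  let e : Fin n → Dual F C := fun i => (LinearMap.proj i).comp C.subtype
  let c' : C := ⟨c, hc.1⟩
  have hcoann : (span F (e '' {i | c i = 0})).dualCoannihilator = F ∙ c' := by
    ext x
    rw [← SetLike.mem_coe, coe_dualCoannihilator_span, Set.mem_ofPred_eq, Set.forall_mem_image,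
      mem_span_singleton]
    constructor
    · intro hxZ
      have hxc : wordSupp (x : Fin n → F) ⊆ wordSupp c := fun i hxi hci => hxi (hxZ hci)
      obtain ⟨a, ha⟩ := mem_span_singleton.mp (hc.mem_span_singleton_of_wordSupp_subset x.2 hxc)
      exact ⟨a, Subtype.ext ha⟩
    · rintro ⟨a, rfl⟩ i (hci : c i = 0)
      simp [e, c', hci]
  obtain ⟨T, hTZ, hcard, hspan⟩ :=
    exists_finset_subset_card_eq_finrank_span_image (K := F) e {i | c i = 0}
  refine ⟨T, ?_, fun x hx => ⟨fun hxT => ?_, ?_⟩⟩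
  · rw [hcard, ← Subspace.finrank_add_finrank_dualCoannihilator_eq, hcoann,
      finrank_span_singleton fun h => hc.2.1 (congrArg Subtype.val h)]
  · have : (⟨x, hx⟩ : C) ∈ (span F (e '' T)).dualCoannihilator := by
      rw [← SetLike.mem_coe, coe_dualCoannihilator_span]
      rintro _ ⟨i, hi, rfl⟩
      exact hxT i hi
    rw [hspan, hcoann, mem_span_singleton] at this
    obtain ⟨a, ha⟩ := this
    exact mem_span_singleton.mpr ⟨a, congrArg Subtype.val ha⟩
  · rintro hxc i hi
    obtain ⟨a, rfl⟩ := mem_span_singleton.mp hxc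
    simp [show c i = 0 from hTZ hi]

end MinimalCodewords

theorem statement_2_general {F : Type} [Field F] {n k : ℕ}
    (C : Submodule F (Fin n → F)) (hk : Module.finrank F C = k) :
    numMinimal C ≤ n.choose (k - 1) := by
  choose T hTcard hT using fun c : {c // IsMinimalCodeword C c} =>
    c.2.exists_finset_forall_eq_zero_iff_mem_span_singleton
  unfold numMinimal
  refine (Nat.card_le_card_of_injective (β := {T : Finset (Fin n) // T.card = k - 1})
    (fun q => ⟨T q.out, by have := hTcard q.out; omega⟩) fun q q' hqq' => ?_).trans ?_
  · have hTT : T q.out = T q'.out := congrArg Subtype.val hqq'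
    rw [← q.out_eq, ← q'.out_eq]
    apply Quot.sound
    obtain ⟨a, ha⟩ := mem_span_singleton.mp <| (hT q.out _ q'.out.2.1).mp <|
      hTT ▸ (hT q'.out _ q'.out.2.1).mpr (mem_span_singleton_self _)
    have ha0 : a ≠ 0 := by
      rintro rfl
      exact q'.out.2.2.1 (by simp [← ha])
    exact ⟨Units.mk0 a ha0, ha⟩
  · rw [Nat.card_eq_fintype_card, Fintype.card_finset_len, Fintype.card_fin]

/-- for every `[n,k]_q` code `C` with `k ≥ 1`, the number of minimal
codewords up to equivalence satisfies `M(C) ≤ C(n, k-1)`. -/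
theorem statement_2 {F : Type} [Field F] [Fintype F] {n k : ℕ}
    (C : Submodule F (Fin n → F)) (hk : Module.finrank F C = k) (hk1 : 1 ≤ k) :
    numMinimal C ≤ n.choose (k - 1) :=
  statement_2_general C hk
end

section
/- Let C be a projective [n,k]_q linear code with n ≥ k ≥ 2. Then M(C) = C(n, k−1) if and only if C is an MDS code, i.e., its minimum Hamming weight equals n − k + 1. -/
open scoped Classical
open Matrix

open Finset Module

/-! Write `Z(c)` for the zero set of a word and `C_S` for the subcode of `C` vanishing on `S`;
restricting to the coordinates in `S` shows `dim C_S ≥ k - |S|`. For a minimal codeword `c`,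
`C_{Z(c)}` is the line through `c`, so minimal codewords up to scalars are determined by their
zero sets, and each such zero set `T` contains a `(k-1)`-set `I` with `C_I = C_T`; the map
`T ↦ I` is injective because `T` is the common zero set of `C_I`. If `C` is MDS, every
`(k-1)`-set is the zero set of a minimum-weight, hence minimal, codeword. Otherwise some nonzero
codeword `c₀` vanishes on a `k`-set `J`, and two distinct `(k-1)`-subsets of `J` cannot both be
images, since both would recover `Z(c₀)`. -/

section Codes

variable {F : Type} [Field F] {n : ℕ} {C : Submodule F (Fin n → F)} {c c' : Fin n → F}

noncomputable def zeroSet (c : Fin n → F) : Finset (Fin n) := {i | c i = 0}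

@[simp] lemma mem_zeroSet {i : Fin n} : i ∈ zeroSet c ↔ c i = 0 := by simp [zeroSet]

lemma ncard_wordSupp_add_card_zeroSet (c : Fin n → F) :
    (wordSupp c).ncard + #(zeroSet c) = n := by
  have : wordSupp c = ↑(zeroSet c)ᶜ := by ext i; simp [wordSupp]
  rw [this, Set.ncard_coe_finset, card_compl_add_card, Fintype.card_fin]

lemma zeroSet_smul {a : F} (ha : a ≠ 0) (c : Fin n → F) : zeroSet (a • c) = zeroSet c := by
  ext i; simp [ha]

lemma finrank_le_length (C : Submodule F (Fin n → F)) : finrank F C ≤ n := by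
  simpa using C.finrank_le

def vanishingSubcode (C : Submodule F (Fin n → F)) (S : Finset (Fin n)) :
    Submodule F (Fin n → F) :=
  C ⊓ LinearMap.ker (LinearMap.funLeft F F ((↑) : S → Fin n))

@[simp] lemma mem_vanishingSubcode {S : Finset (Fin n)} :
    c ∈ vanishingSubcode C S ↔ c ∈ C ∧ ∀ i ∈ S, c i = 0 := by
  simp [vanishingSubcode, LinearMap.funLeft, funext_iff]

lemma vanishingSubcode_empty : vanishingSubcode C ∅ = C := by ext; simp

lemma vanishingSubcode_anti {S T : Finset (Fin n)} (h : S ⊆ T) :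
    vanishingSubcode C T ≤ vanishingSubcode C S := fun _ hc =>
  mem_vanishingSubcode.2 ⟨(mem_vanishingSubcode.1 hc).1, fun i hi =>
    (mem_vanishingSubcode.1 hc).2 i (h hi)⟩

lemma mem_vanishingSubcode_insert {S : Finset (Fin n)} {j : Fin n} :
    c ∈ vanishingSubcode C (insert j S) ↔ c ∈ vanishingSubcode C S ∧ c j = 0 := by
  simp only [mem_vanishingSubcode, forall_mem_insert]
  tauto

lemma mem_vanishingSubcode_zeroSet (hc : c ∈ C) : c ∈ vanishingSubcode C (zeroSet c) := by
  simp [hc]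

lemma finrank_le_finrank_vanishingSubcode_add_card (C : Submodule F (Fin n → F))
    (S : Finset (Fin n)) : finrank F C ≤ finrank F (vanishingSubcode C S) + #S := by
  let restrict : C →ₗ[F] (S → F) :=
    LinearMap.funLeft F F ((↑) : S → Fin n) ∘ₗ C.subtype
  have hker : (LinearMap.ker restrict).map C.subtype = vanishingSubcode C S := by
    rw [vanishingSubcode, ← Submodule.map_comap_subtype]
    rfl
  have hrank := restrict.finrank_range_add_finrank_ker
  have hrange : finrank F (LinearMap.range restrict) ≤ #S := by
    simpa using (LinearMap.range restrict).finrank_le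
  rw [← hker, Submodule.finrank_map_subtype_eq]
  omega

lemma exists_subset_vanishingSubcode_eq (C : Submodule F (Fin n → F)) (S : Finset (Fin n)) :
    ∃ I ⊆ S, vanishingSubcode C I = vanishingSubcode C S ∧
      #I + finrank F (vanishingSubcode C S) ≤ finrank F C := by
  -- greedy: a new coordinate joins `I` only when it cuts the dimension of `C_S`
  induction S using Finset.induction_on with
  | empty =>
    exact ⟨∅, subset_refl _, rfl, by rw [card_empty, zero_add, vanishingSubcode_empty]⟩
  | @insert j S _ ih =>
    obtain ⟨I, hIS, hIeq, hIcard⟩ := ih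
    have hle : vanishingSubcode C (insert j S) ≤ vanishingSubcode C S :=
      vanishingSubcode_anti (subset_insert j S)
    by_cases heq : vanishingSubcode C (insert j S) = vanishingSubcode C S
    · exact ⟨I, hIS.trans (subset_insert j S), hIeq.trans heq.symm, heq ▸ hIcard⟩
    · refine ⟨insert j I, insert_subset_insert j hIS, ?_, ?_⟩
      · ext c
        rw [mem_vanishingSubcode_insert, mem_vanishingSubcode_insert, hIeq]
      · have := Submodule.finrank_lt_finrank_of_lt (lt_of_le_of_ne hle heq)
        have := card_insert_le j I
        omega

lemma IsMinimalCodeword.mem_span_of_zeroSet_subset (hc : IsMinimalCodeword C c) (hc' : c' ∈ C)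
    (h : zeroSet c ⊆ zeroSet c') : c' ∈ F ∙ c := by
  obtain ⟨hcC, hc0, hmin⟩ := hc
  obtain ⟨i, hi⟩ : ∃ i, c i ≠ 0 := by
    by_contra! h
    exact hc0 (funext h)
  set a := c' i / c i
  have hzero : c' - a • c = 0 := by
    by_contra hne
    refine hmin _ (sub_mem hc' (C.smul_mem a hcC)) hne
      ⟨fun l hl hcl => hl ?_, fun hsub => hsub hi ?_⟩
    · simp [hcl, mem_zeroSet.1 (h (mem_zeroSet.2 hcl))]
    · simp [a, hi]
  exact Submodule.mem_span_singleton.2 ⟨a, (sub_eq_zero.1 hzero).symm⟩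

lemma IsMinimalCodeword.vanishingSubcode_zeroSet (hc : IsMinimalCodeword C c) :
    vanishingSubcode C (zeroSet c) = F ∙ c := by
  refine le_antisymm (fun c' hc' => ?_) ((Submodule.span_singleton_le_iff_mem _ _).2
    (mem_vanishingSubcode_zeroSet hc.1))
  rw [mem_vanishingSubcode] at hc'
  exact hc.mem_span_of_zeroSet_subset hc'.1 fun i hi => mem_zeroSet.2 (hc'.2 i hi)

lemma IsMinimalCodeword.finrank_sub_one_le_card_zeroSet (hc : IsMinimalCodeword C c) :
    finrank F C - 1 ≤ #(zeroSet c) := by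
  have := finrank_le_finrank_vanishingSubcode_add_card C (zeroSet c)
  rw [hc.vanishingSubcode_zeroSet, finrank_span_singleton hc.2.1] at this
  omega

def minimalZeroSets (C : Submodule F (Fin n → F)) : Set (Finset (Fin n)) :=
  zeroSet '' {c | IsMinimalCodeword C c}

lemma numMinimal_eq_ncard_minimalZeroSets (C : Submodule F (Fin n → F)) :
    numMinimal C = (minimalZeroSets C).ncard := by
  rw [numMinimal, ← Nat.card_coe_set_eq]
  refine Nat.card_eq_of_bijective
    (Quot.lift (fun c => ⟨zeroSet c.1, c.1, c.2, rfl⟩) ?_) ⟨?_, ?_⟩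
  · rintro c c' ⟨a, ha⟩
    exact Subtype.ext (ha ▸ zeroSet_smul a.ne_zero c.1).symm
  · rintro ⟨c⟩ ⟨c'⟩ h
    have h' : zeroSet c.1 = zeroSet c'.1 := congrArg Subtype.val h
    obtain ⟨a, ha⟩ :=
      Submodule.mem_span_singleton.1 (c.2.mem_span_of_zeroSet_subset c'.2.1 h'.le)
    have ha0 : a ≠ 0 := by
      rintro rfl
      exact c'.2.2.1 (by simp [← ha])
    exact Quot.sound ⟨Units.mk0 a ha0, ha⟩
  · rintro ⟨_, c, hc, rfl⟩
    exact ⟨Quot.mk _ ⟨c, hc⟩, rfl⟩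

lemma minDist_le_ncard_wordSupp (hc : c ∈ C) (hc0 : c ≠ 0) :
    minDist C ≤ (wordSupp c).ncard :=
  Nat.sInf_le ⟨c, hc, hc0, rfl⟩

lemma card_zeroSet_le_sub_minDist (hc : c ∈ C) (hc0 : c ≠ 0) :
    #(zeroSet c) ≤ n - minDist C := by
  have := minDist_le_ncard_wordSupp hc hc0
  have := ncard_wordSupp_add_card_zeroSet c
  omega

lemma isMinimalCodeword_of_ncard_wordSupp_eq_minDist (hc : c ∈ C) (hc0 : c ≠ 0)
    (h : (wordSupp c).ncard = minDist C) : IsMinimalCodeword C c :=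
  ⟨hc, hc0, fun _ hc' hc'0 hss =>
    (Set.ncard_lt_ncard hss).not_ge (h ▸ minDist_le_ncard_wordSupp hc' hc'0)⟩

lemma exists_ne_zero_mem_vanishingSubcode {S : Finset (Fin n)} (h : #S < finrank F C) :
    ∃ c ∈ vanishingSubcode C S, c ≠ 0 := by
  refine Submodule.exists_mem_ne_zero_of_ne_bot fun hbot => ?_
  have := finrank_le_finrank_vanishingSubcode_add_card C S
  rw [hbot, finrank_bot] at this
  omega

lemma exists_finrank_le_card_zeroSet_of_minDist_ne (hk : 0 < finrank F C)
    (hd : minDist C ≠ n - finrank F C + 1) :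
    ∃ c ∈ C, c ≠ 0 ∧ finrank F C ≤ #(zeroSet c) := by
  obtain ⟨T, -, hT⟩ := exists_subset_card_eq (s := (univ : Finset (Fin n)))
    (n := finrank F C - 1) (by simpa using (finrank_le_length C).trans' (Nat.sub_le _ 1))
  obtain ⟨c₁, hc₁, hc₁0⟩ :=
    exists_ne_zero_mem_vanishingSubcode (C := C) (S := T) (by omega)
  rw [mem_vanishingSubcode] at hc₁
  have hT₁ : T ⊆ zeroSet c₁ := fun i hi => mem_zeroSet.2 (hc₁.2 i hi)
  obtain ⟨c, hc, hc0, hcd⟩ :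
      minDist C ∈ {w | ∃ c ∈ C, c ≠ 0 ∧ (wordSupp c).ncard = w} :=
    Nat.sInf_mem ⟨_, c₁, hc₁.1, hc₁0, rfl⟩
  refine ⟨c, hc, hc0, ?_⟩
  have := minDist_le_ncard_wordSupp hc₁.1 hc₁0
  have := card_le_card hT₁
  have := ncard_wordSupp_add_card_zeroSet c
  have := ncard_wordSupp_add_card_zeroSet c₁
  have := finrank_le_length C
  omega

lemma ncard_setOf_card_eq (m : ℕ) : {T : Finset (Fin n) | #T = m}.ncard = n.choose m := by
  have : {T : Finset (Fin n) | #T = m} =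
      ((powersetCard m univ : Finset (Finset (Fin n))) : Set (Finset (Fin n))) := by ext; simp
  rw [this, Set.ncard_coe_finset, card_powersetCard, card_univ, Fintype.card_fin]

lemma minimalZeroSets_eq_of_minDist_eq (hk : 0 < finrank F C)
    (hd : minDist C = n - finrank F C + 1) :
    minimalZeroSets C = {T | #T = finrank F C - 1} := by
  have hkn := finrank_le_length C
  ext T
  constructor
  · rintro ⟨c, hc, rfl⟩
    have := hc.finrank_sub_one_le_card_zeroSet
    have := card_zeroSet_le_sub_minDist hc.1 hc.2.1
    show _ = _
    omega
  · intro (hT : #T = finrank F C - 1)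
    obtain ⟨c, hc, hc0⟩ := exists_ne_zero_mem_vanishingSubcode (C := C) (S := T) (by omega)
    rw [mem_vanishingSubcode] at hc
    have hzeros := card_zeroSet_le_sub_minDist hc.1 hc0
    have hTc : T = zeroSet c :=
      eq_of_subset_of_card_le (fun i hi => mem_zeroSet.2 (hc.2 i hi)) (by omega)
    refine ⟨c, isMinimalCodeword_of_ncard_wordSupp_eq_minDist hc.1 hc0 ?_, hTc.symm⟩
    have := ncard_wordSupp_add_card_zeroSet c
    rw [← hTc] at this
    omega

lemma exists_card_eq_vanishingSubcode_eq {T : Finset (Fin n)}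
    (hT : T ∈ minimalZeroSets C) :
    ∃ I, #I = finrank F C - 1 ∧ vanishingSubcode C I = vanishingSubcode C T := by
  obtain ⟨c, hc, rfl⟩ := hT
  obtain ⟨I, -, hIeq, hIcard⟩ := exists_subset_vanishingSubcode_eq C (zeroSet c)
  have hI := finrank_le_finrank_vanishingSubcode_add_card C I
  rw [hc.vanishingSubcode_zeroSet, finrank_span_singleton hc.2.1] at hIcard
  rw [hIeq, hc.vanishingSubcode_zeroSet, finrank_span_singleton hc.2.1] at hI
  exact ⟨I, by omega, hIeq⟩

lemma zeroSet_eq_of_mem_vanishingSubcode {T : Finset (Fin n)} (hT : T ∈ minimalZeroSets C)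
    (hc' : c' ∈ vanishingSubcode C T) (hc'0 : c' ≠ 0) : zeroSet c' = T := by
  obtain ⟨c, hc, rfl⟩ := hT
  rw [hc.vanishingSubcode_zeroSet, Submodule.mem_span_singleton] at hc'
  obtain ⟨a, rfl⟩ := hc'
  exact zeroSet_smul (by rintro rfl; simp at hc'0) c

lemma ncard_minimalZeroSets_lt_of_minDist_ne (hk : 2 ≤ finrank F C)
    (hd : minDist C ≠ n - finrank F C + 1) :
    (minimalZeroSets C).ncard < n.choose (finrank F C - 1) := by
  obtain ⟨c₀, hc₀C, hc₀0, hc₀zeros⟩ :=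
    exists_finrank_le_card_zeroSet_of_minDist_ne (by omega) hd
  obtain ⟨J, hJ, hJcard⟩ := exists_subset_card_eq hc₀zeros
  obtain ⟨x, hx, y, hy, hxy⟩ := one_lt_card.1 (by omega : 1 < #J)
  choose! basis hbasis_card hbasis_eq using
    fun T (hT : T ∈ minimalZeroSets C) => exists_card_eq_vanishingSubcode_eq hT
  have hrecover : ∀ T ∈ minimalZeroSets C, ∀ c ∈ vanishingSubcode C (basis T), c ≠ 0 →
      zeroSet c = T := fun T hT c hc hc0 =>
    zeroSet_eq_of_mem_vanishingSubcode hT (hbasis_eq T hT ▸ hc) hc0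
  have hinj : Set.InjOn basis (minimalZeroSets C) := by
    intro T₁ h₁ T₂ h₂ h
    obtain ⟨c, hc, rfl⟩ := id h₁
    have hc₁ : c ∈ vanishingSubcode C (basis (zeroSet c)) :=
      (hbasis_eq _ h₁).symm ▸ mem_vanishingSubcode_zeroSet hc.1
    exact hrecover T₂ h₂ c (h ▸ hc₁) hc.2.1
  have hmiss : ¬ (J.erase x ∈ basis '' minimalZeroSets C ∧
      J.erase y ∈ basis '' minimalZeroSets C) := by
    rintro ⟨⟨T₁, h₁, e₁⟩, ⟨T₂, h₂, e₂⟩⟩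
    have hc₀mem : ∀ I ⊆ J, c₀ ∈ vanishingSubcode C I := fun I hI =>
      mem_vanishingSubcode.2 ⟨hc₀C, fun i hi => mem_zeroSet.1 (hJ (hI hi))⟩
    have hT : T₁ = T₂ :=
      (hrecover T₁ h₁ c₀ (e₁ ▸ hc₀mem _ (erase_subset x J)) hc₀0).symm.trans
        (hrecover T₂ h₂ c₀ (e₂ ▸ hc₀mem _ (erase_subset y J)) hc₀0)
    have : J.erase x = J.erase y := e₁.symm.trans (hT ▸ e₂)
    exact notMem_erase x J (this ▸ mem_erase.2 ⟨hxy, hx⟩)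
  have hsub : basis '' minimalZeroSets C ⊂ {I | #I = finrank F C - 1} := by
    refine ⟨Set.image_subset_iff.2 hbasis_card, fun h => hmiss ⟨h ?_, h ?_⟩⟩ <;>
      simp [card_erase_of_mem, hx, hy, hJcard]
  calc (minimalZeroSets C).ncard = (basis '' minimalZeroSets C).ncard :=
        hinj.ncard_image.symm
    _ < _ := Set.ncard_lt_ncard hsub
    _ = n.choose _ := ncard_setOf_card_eq _

end Codes

theorem statement_3_general {F : Type} [Field F] {n k : ℕ}
    (C : Submodule F (Fin n → F)) (hk : Module.finrank F C = k)
    (hk2 : 2 ≤ k) :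
    numMinimal C = n.choose (k - 1) ↔ minDist C = n - k + 1 := by
  subst hk
  rw [numMinimal_eq_ncard_minimalZeroSets]
  constructor
  · intro h
    by_contra hd
    exact (ncard_minimalZeroSets_lt_of_minDist_ne hk2 hd).ne h
  · intro hd
    rw [minimalZeroSets_eq_of_minDist_eq (by omega) hd, ncard_setOf_card_eq]

/-- a projective `[n,k]_q` code `C` with `n ≥ k ≥ 2` satisfies
`M(C) = C(n, k-1)` iff `C` is MDS, i.e. its minimum Hamming weight equals `n - k + 1`. -/
theorem statement_3 {F : Type} [Field F] [Fintype F] {n k : ℕ}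
    (C : Submodule F (Fin n → F)) (hk : Module.finrank F C = k)
    (hproj : IsProjective C) (hk2 : 2 ≤ k) (hkn : k ≤ n) :
    numMinimal C = n.choose (k - 1) ↔ minDist C = n - k + 1 :=
  statement_3_general C hk hk2
end

section
/- Let C be a projective [n,k]_q linear code with k ≥ 2 and let r be an integer with 1 ≤ r ≤ (q^k−1)/(q−1). If n > (q^k−1)/(q−1) − α_q(k,r), then M(C) > (q^k−1)/(q−1) − r. -/
open scoped Classical
open Matrix

/-!
Write `θ = (q^k - 1)/(q - 1)` for the number of points of a `k`-dimensional space. Work in the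
dual `C*` of the code: by projectivity the coordinate functionals `x ↦ x i` are `n` distinct
points of `C*`, and a codeword `c` determines the hyperplane `c^⊥` of `C*`, whose coordinate
points are exactly the zeros of `c`. If `c` is not minimal, a codeword `c'` with strictly smaller
support vanishes wherever `c` does, so every coordinate point on `c^⊥` lies on the
codimension-`2` subspace `⟨c, c'⟩^⊥`. If `M(C) ≤ θ - r`, at least `r` points of `C` are
non-minimal, giving `r` distinct such pairs; the points on the hyperplanes but off their
subspaces then avoid all `n` coordinate points, so `α_q(k, r) + n ≤ θ`.
-/

open Module

theorem Set.exists_injective_fin_of_le_ncard {α : Type*} {s : Set α} {r : ℕ} (hs : s.Finite)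
    (hr : r ≤ s.ncard) : ∃ f : Fin r → α, Function.Injective f ∧ ∀ i, f i ∈ s := by
  have := hs.fintype
  obtain ⟨e⟩ := Function.Embedding.nonempty_of_card_le (α := Fin r) (β := s)
    (by rwa [Fintype.card_fin, ← Nat.card_eq_fintype_card, Nat.card_coe_set_eq])
  exact ⟨fun i => e i, fun i j h => e.injective (Subtype.ext h), fun i => (e i).2⟩

section Points

variable {F : Type} [Field F] {V : Type*} [AddCommGroup V] [Module F V]

variable (F V) in
def points : Set (Submodule F V) := {P | finrank F P = 1}

theorem ncard_points [Fintype F] [FiniteDimensional F V] :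
    (points F V).ncard = (Fintype.card F ^ finrank F V - 1) / (Fintype.card F - 1) := by
  rw [← Nat.card_coe_set_eq, ← Nat.card_eq_fintype_card, ← Module.natCard_eq_pow_finrank,
    ← Projectivization.card'']
  exact Nat.card_congr (Projectivization.equivSubmodule F V).symm

theorem exists_eq_span_singleton_of_finrank_eq_one {P : Submodule F V} (hP : finrank F P = 1) :
    ∃ v ≠ 0, P = F ∙ v :=
  ⟨_, (Projectivization.mk'' P hP).rep_nonzero, by
    rw [← Projectivization.submodule_eq, Projectivization.submodule_mk'']⟩

theorem finrank_sup_eq_two_of_ne [FiniteDimensional F V] {P Q : Submodule F V}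
    (hP : finrank F P = 1) (hQ : finrank F Q = 1) (hPQ : P ≠ Q) :
    finrank F ↥(P ⊔ Q) = 2 := by
  have hinf : finrank F ↥(P ⊓ Q) = 0 := by
    by_contra h
    have h1 : finrank F ↥(P ⊓ Q) = 1 := by
      have := Submodule.finrank_mono (inf_le_left : P ⊓ Q ≤ P)
      omega
    apply hPQ
    rw [← Submodule.eq_of_le_of_finrank_eq inf_le_left (h1.trans hP.symm),
      Submodule.eq_of_le_of_finrank_eq inf_le_right (h1.trans hQ.symm)]
  have := Submodule.finrank_sup_add_finrank_inf_eq P Q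
  omega

end Points

section AlphaBound

variable {F : Type} [Field F] [Fintype F] {V : Type*} [AddCommGroup V] [Module F V]
  [FiniteDimensional F V] {k r : ℕ}

theorem alphaQ_le_ncard (hV : finrank F V = k) (H U : Fin r → Submodule F V)
    (hH_inj : Function.Injective H) (hH : ∀ i, finrank F (H i) = k - 1)
    (hU : ∀ i, finrank F (U i) = k - 2) (hUH : ∀ i, U i ≤ H i) :
    alphaQ F k r ≤ {P ∈ points F V | ∃ i, P ≤ H i ∧ ¬ P ≤ U i}.ncard := by
  let e := Submodule.orderIsoMapComap
    (LinearEquiv.ofFinrankEq (R := F) V (Fin k → F) (by simpa using hV))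
  have he (P : Submodule F V) : finrank F (e P) = finrank F P := LinearEquiv.finrank_map_eq _ P
  refine Nat.sInf_le ⟨e '' {P ∈ points F V | ∃ i, P ≤ H i ∧ ¬ P ≤ U i},
    Set.ncard_image_of_injective _ e.injective, e ∘ H, e ∘ U, e.injective.comp hH_inj,
    fun i => (he _).trans (hH i), fun i => (he _).trans (hU i), fun i => e.monotone (hUH i), ?_⟩
  rintro P hP ⟨i, hPH, hPU⟩
  rw [← e.apply_symm_apply P] at hP hPH hPU ⊢
  exact Set.mem_image_of_mem e ⟨(he _).symm.trans hP, i, e.le_iff_le.1 hPH, mt e.le_iff_le.2 hPU⟩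

theorem alphaQ_add_le {n : ℕ} (hV : finrank F V = k) {g : Fin n → V} (hg : ∀ j, g j ≠ 0)
    (hg_inj : Function.Injective fun j => F ∙ g j) (H U : Fin r → Submodule F V)
    (hH_inj : Function.Injective H) (hH : ∀ i, finrank F (H i) = k - 1)
    (hU : ∀ i, finrank F (U i) = k - 2) (hUH : ∀ i, U i ≤ H i)
    (hgU : ∀ i j, g j ∈ H i → g j ∈ U i) :
    alphaQ F k r + n ≤ (Fintype.card F ^ k - 1) / (Fintype.card F - 1) := by
  have : Finite V := Module.finite_of_finite F
  set S := {P ∈ points F V | ∃ i, P ≤ H i ∧ ¬ P ≤ U i}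
  set G := Set.range fun j => F ∙ g j
  have hG : G ⊆ points F V := by
    rintro _ ⟨j, rfl⟩
    exact finrank_span_singleton (hg j)
  have hSG : Disjoint S G := by
    rw [Set.disjoint_right]
    rintro _ ⟨j, rfl⟩ ⟨-, i, hH, hU⟩
    rw [Submodule.span_singleton_le_iff_mem] at hH hU
    exact hU (hgU i j hH)
  calc alphaQ F k r + n ≤ S.ncard + G.ncard := by
        rw [Set.ncard_range_of_injective hg_inj, Nat.card_fin]
        exact Nat.add_le_add_right (alphaQ_le_ncard hV H U hH_inj hH hU hUH) n
    _ = (S ∪ G).ncard := (Set.ncard_union_eq hSG).symm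
    _ ≤ (points F V).ncard := Set.ncard_le_ncard (Set.union_subset (fun _ hP => hP.1) hG)
    _ = _ := by rw [ncard_points, hV]

end AlphaBound

section Code

variable {F : Type} [Field F] {n : ℕ} (C : Submodule F (Fin n → F))

def coordFun (i : Fin n) : Dual F C := (LinearMap.proj i).comp C.subtype

@[simp]
theorem coordFun_apply (i : Fin n) (c : C) : coordFun C i c = (c : Fin n → F) i := rfl

theorem coordFun_mem_dualAnnihilator_span_singleton_iff (i : Fin n) (c : C) :
    coordFun C i ∈ (F ∙ c).dualAnnihilator ↔ (c : Fin n → F) i = 0 := by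
  rw [Submodule.mem_dualAnnihilator, ← coordFun_apply]
  refine ⟨fun h => h c (Submodule.mem_span_singleton_self c), fun h w hw => ?_⟩
  obtain ⟨a, rfl⟩ := Submodule.mem_span_singleton.1 hw
  rw [map_smul, h, smul_zero]

theorem wordSupp_smul {a : F} (ha : a ≠ 0) (c : Fin n → F) : wordSupp (a • c) = wordSupp c := by
  ext i
  simp [wordSupp, ha]

namespace IsProjective

variable {C}

theorem coordFun_ne_zero (hC : IsProjective C) (i : Fin n) : coordFun C i ≠ 0 := by
  obtain ⟨c, hc, hci⟩ := hC.1 i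
  exact fun h => hci (by simpa using LinearMap.congr_fun h ⟨c, hc⟩)

theorem injective_span_coordFun (hC : IsProjective C) :
    Function.Injective fun i => F ∙ coordFun C i := by
  intro i j hij
  by_contra hne
  obtain ⟨u, hu⟩ := Submodule.span_singleton_eq_span_singleton.1 hij
  refine hC.2 i j hne ⟨u, u.ne_zero, fun c hc => ?_⟩
  simpa [Units.smul_def] using LinearMap.congr_fun hu.symm ⟨c, hc⟩

end IsProjective

def minimalPoints : Set (Submodule F C) := {P | ∃ c : C, IsMinimalCodeword C c ∧ P = F ∙ c}

theorem ncard_minimalPoints_le [Fintype F] : (minimalPoints C).ncard ≤ numMinimal C := by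
  let f (c : {c // IsMinimalCodeword C c}) : Submodule F C := F ∙ ⟨c.1, c.2.1⟩
  have hf (c c' : {c // IsMinimalCodeword C c}) (h : ∃ a : Fˣ, a • c.1 = c'.1) : f c = f c' := by
    obtain ⟨a, ha⟩ := h
    have : (⟨c'.1, c'.2.1⟩ : C) = a • ⟨c.1, c.2.1⟩ := Subtype.ext ha.symm
    simp only [f, this, Submodule.span_singleton_group_smul_eq]
  have hrange : minimalPoints C = Set.range f := by
    ext P
    exact ⟨fun ⟨c, hc, hP⟩ => ⟨⟨c, hc⟩, hP.symm⟩, fun ⟨c, hP⟩ => ⟨_, c.2, hP.symm⟩⟩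
  rw [hrange, ← Set.range_quot_lift hf, ← Nat.card_coe_set_eq]
  exact Finite.card_range_le _

theorem exists_point_ne_of_notMem_minimalPoints {P : Submodule F C} (hP : P ∈ points F C)
    (hPmin : P ∉ minimalPoints C) :
    ∃ Q ∈ points F C, Q ≠ P ∧
      ∀ i, coordFun C i ∈ P.dualAnnihilator → coordFun C i ∈ Q.dualAnnihilator := by
  obtain ⟨c, hc0, rfl⟩ := exists_eq_span_singleton_of_finrank_eq_one hP
  obtain ⟨c', hc'C, hc'0, hsupp⟩ : ∃ c' ∈ C, c' ≠ 0 ∧ wordSupp c' ⊂ wordSupp (c : Fin n → F) := by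
    by_contra! h
    exact hPmin ⟨c, ⟨c.2, by simpa using hc0, h⟩, rfl⟩
  refine ⟨F ∙ ⟨c', hc'C⟩, finrank_span_singleton (by simpa using hc'0), fun h => ?_, fun i => ?_⟩
  · obtain ⟨u, hu⟩ := Submodule.span_singleton_eq_span_singleton.1 h
    rw [← hu, Units.smul_def, Submodule.coe_smul, wordSupp_smul u.ne_zero] at hsupp
    exact hsupp.ne rfl
  · simp only [coordFun_mem_dualAnnihilator_span_singleton_iff]
    intro hci
    by_contra hc'i
    exact hsupp.1 hc'i hci

end Code

theorem exists_hyperplanes_of_le_ncard_nonminimal {F : Type} [Field F] [Fintype F] {n r : ℕ}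
    (C : Submodule F (Fin n → F))
    (hr : r ≤ (points F C \ minimalPoints C).ncard) :
    ∃ H U : Fin r → Submodule F (Dual F C), Function.Injective H ∧
      (∀ i, finrank F (H i) = finrank F C - 1) ∧ (∀ i, finrank F (U i) = finrank F C - 2) ∧
      (∀ i, U i ≤ H i) ∧ ∀ i j, coordFun C j ∈ H i → coordFun C j ∈ U i := by
  have : Finite (Dual F C) := Module.finite_of_finite F
  obtain ⟨P, hP_inj, hP⟩ := Set.exists_injective_fin_of_le_ncard (Set.toFinite _) hr
  choose Q hQ hQP hPQ using fun i => exists_point_ne_of_notMem_minimalPoints C (hP i).1 (hP i).2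
  refine ⟨fun i => (P i).dualAnnihilator, fun i => (P i ⊔ Q i).dualAnnihilator,
    fun i j h => hP_inj (Subspace.dualAnnihilator_inj.1 h), fun i => ?_, fun i => ?_,
    fun i => Submodule.dualAnnihilator_anti le_sup_left, fun i j h => ?_⟩
  · dsimp only
    have := Subspace.finrank_add_finrank_dualAnnihilator_eq (P i)
    have hPi : finrank F (P i) = 1 := (hP i).1
    omega
  · dsimp only
    have := Subspace.finrank_add_finrank_dualAnnihilator_eq (P i ⊔ Q i)
    have := finrank_sup_eq_two_of_ne (hP i).1 (hQ i) (hQP i).symm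
    omega
  · dsimp only at h ⊢
    rw [Submodule.dualAnnihilator_sup_eq]
    exact ⟨h, hPQ i j h⟩

theorem statement_4_general {F : Type} [Field F] [Fintype F] {q n k r : ℕ}
    (hq : Fintype.card F = q)
    (C : Submodule F (Fin n → F)) (hk : Module.finrank F C = k)
    (hproj : IsProjective C)
    (hr2 : r ≤ (q ^ k - 1) / (q - 1))
    (hn : n > (q ^ k - 1) / (q - 1) - alphaQ F k r) :
    numMinimal C > (q ^ k - 1) / (q - 1) - r := by
  subst hq hk
  by_contra! hM
  have hr : r ≤ (points F C \ minimalPoints C).ncard := by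
    have hdiff := Set.le_ncard_sdiff (minimalPoints C) (points F C)
    rw [ncard_points] at hdiff
    have := ncard_minimalPoints_le C
    omega
  obtain ⟨H, U, hH_inj, hH, hU, hUH, hcoord⟩ := exists_hyperplanes_of_le_ncard_nonminimal C hr
  have := alphaQ_add_le Subspace.dual_finrank_eq hproj.coordFun_ne_zero
    hproj.injective_span_coordFun H U hH_inj hH hU hUH hcoord
  omega

/-- if `C` is a projective `[n,k]_q` code, `1 ≤ r ≤ (q^k-1)/(q-1)` and
`n > (q^k-1)/(q-1) - α_q(k,r)`, then `M(C) > (q^k-1)/(q-1) - r`. -/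
theorem statement_4 {F : Type} [Field F] [Fintype F] {q n k r : ℕ}
    (hq : Fintype.card F = q)
    (C : Submodule F (Fin n → F)) (hk : Module.finrank F C = k)
    (hproj : IsProjective C) (hk2 : 2 ≤ k)
    (hr1 : 1 ≤ r) (hr2 : r ≤ (q ^ k - 1) / (q - 1))
    (hn : n > (q ^ k - 1) / (q - 1) - alphaQ F k r) :
    numMinimal C > (q ^ k - 1) / (q - 1) - r :=
  statement_4_general hq C hk hproj hr2 hn
end

section
/- For every prime power q, every integer k ≥ 3 and every integer r ≥ 1, α_q(k,r) ≥ r·q^{k−2} − C(r,2)·q^{k−3}, where C(r,2) is the binomial coefficient r choose 2. -/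
open scoped Classical
open Matrix

/-! Write `A i` for the points of `H i` off `U i`. Each `A i` is an affine space with
`q ^ (k - 2)` points. For `i ≠ j`, `A i ∩ A j` consists of points of the `(k-2)`-space
`H i ⊓ H j` off `U i`, and the hyperplane `U i` of `H i` meets `H i ⊓ H j` in codimension at most
one; so `#(A i ∩ A j) ≤ q ^ (k - 3)`.
The second Bonferroni inequality `∑ #(A i) ≤ #(⋃ A i) + ∑_{i<j} #(A i ∩ A j)` then bounds
`#S ≥ #(⋃ A i)` from below.

Since `alphaQ` is an `sInf` over `ℕ`, it is `0` when no configuration exists, so one also has to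
produce a configuration whenever the bound is positive, i.e. when `r ≤ 2q`: the `q ^ 2`
hyperplanes `x₀ = a x₁ + b x₂` (with any codimension-one subspaces `U i`) do. -/

open Module
open scoped LinearAlgebra.Projectivization

namespace Nat

theorem choose_two_mul_two (n : ℕ) : n.choose 2 * 2 = n * (n - 1) := by
  rw [Nat.choose_two_right, Nat.div_mul_cancel (Nat.even_mul_pred_self n).two_dvd]

theorem le_sq_of_choose_two_lt {n q : ℕ} (hq : 2 ≤ q) (h : n.choose 2 < n * q) :
    n ≤ q ^ 2 := by
  have := choose_two_mul_two n
  by_contra! hn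
  have : 2 * q ≤ q ^ 2 := by nlinarith
  have : 2 * q ≤ n - 1 := by omega
  nlinarith

end Nat

namespace Finset

theorem two_mul_sum_card_le {α ι : Type*} [DecidableEq α] [DecidableEq ι]
    (A : ι → Finset α) (s : Finset ι) :
    2 * ∑ i ∈ s, #(A i) ≤ 2 * #(s.biUnion A) + ∑ p ∈ s.offDiag, #(A p.1 ∩ A p.2) := by
  induction s using Finset.induction_on with
  | empty => simp
  | @insert a s ha ih =>
    have hdisj₁ : Disjoint (s.offDiag ∪ {a} ×ˢ s) (s ×ˢ {a}) := by
      rw [disjoint_left]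
      rintro ⟨i, j⟩
      simp only [mem_union, mem_offDiag, mem_product, mem_singleton]
      grind
    have hdisj₂ : Disjoint s.offDiag ({a} ×ˢ s) := by
      rw [disjoint_left]
      rintro ⟨i, j⟩
      simp only [mem_offDiag, mem_product, mem_singleton]
      grind
    have hleft : ∑ p ∈ {a} ×ˢ s, #(A p.1 ∩ A p.2) = ∑ i ∈ s, #(A a ∩ A i) := by
      rw [sum_product, sum_singleton]
    have hright : ∑ p ∈ s ×ˢ {a}, #(A p.1 ∩ A p.2) = ∑ i ∈ s, #(A a ∩ A i) := by
      simp only [sum_product, sum_singleton, inter_comm]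
    have hnew :
        #(A a) + #(s.biUnion A) ≤ #(A a ∪ s.biUnion A) + ∑ i ∈ s, #(A a ∩ A i) := by
      rw [← card_union_add_card_inter, inter_biUnion]
      exact Nat.add_le_add_left card_biUnion_le _
    rw [sum_insert ha, biUnion_insert, offDiag_insert ha, sum_union hdisj₁, sum_union hdisj₂,
      hleft, hright]
    omega

end Finset

namespace Submodule

variable {K V : Type*} [DivisionRing K] [AddCommGroup V] [Module K V]

theorem exists_le_finrank_eq (W : Submodule K V) {n : ℕ} (hn : n ≤ finrank K W) :
    ∃ U ≤ W, finrank K U = n := by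
  obtain ⟨f, hf⟩ := exists_linearIndependent_of_le_finrank hn
  refine ⟨span K (Set.range (W.subtype ∘ f)), span_le.2 ?_, ?_⟩
  · rintro _ ⟨i, rfl⟩
    exact (f i).2
  · rw [finrank_span_eq_card (hf.map' W.subtype W.ker_subtype), Fintype.card_fin]

variable [FiniteDimensional K V]

theorem finrank_le_finrank_inf_add_one {H U W : Submodule K V} (hUH : U ≤ H) (hWH : W ≤ H)
    (hrank : finrank K H ≤ finrank K U + 1) : finrank K W ≤ finrank K ↥(U ⊓ W) + 1 := by
  have := finrank_sup_add_finrank_inf_eq U W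
  have := finrank_mono (sup_le hUH hWH)
  omega

theorem finrank_inf_lt_of_ne {H H' : Submodule K V} (hne : H ≠ H')
    (hrank : finrank K H = finrank K H') : finrank K ↥(H ⊓ H') < finrank K H := by
  refine finrank_lt_finrank_of_lt (inf_le_left.lt_of_ne fun h => hne ?_)
  exact eq_of_le_of_finrank_le (h ▸ inf_le_right) hrank.ge

end Submodule

section ProjectivePoints

variable {F V : Type*} [Field F] [AddCommGroup V] [Module F V]

def projPoints (W : Submodule F V) : Set (Submodule F V) :=
  {P | finrank F P = 1 ∧ P ≤ W}

theorem projPoints_mono {W W' : Submodule F V} (h : W ≤ W') : projPoints W ⊆ projPoints W' :=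
  fun _ hP => ⟨hP.1, hP.2.trans h⟩

noncomputable def projPointsEquiv (W : Submodule F V) : projPoints W ≃ ℙ F W :=
  (Equiv.subtypeEquivRight fun _ => and_comm).trans <|
    (Equiv.subtypeSubtypeEquivSubtypeInter (· ≤ W) (finrank F · = 1)).symm.trans <|
      (Equiv.subtypeEquiv (Submodule.MapSubtype.orderIso W).toEquiv fun P => by
        rw [← Submodule.finrank_map_subtype_eq W P]; rfl).symm.trans <|
        (Projectivization.equivSubmodule F W).symm

variable [FiniteDimensional F V]

theorem ncard_projPoints_mul (W : Submodule F V) :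
    (projPoints W).ncard * (Nat.card F - 1) = Nat.card F ^ finrank F W - 1 := by
  rw [← Nat.card_coe_set_eq, Nat.card_congr (projPointsEquiv W), ← Projectivization.card,
    Module.natCard_eq_pow_finrank (K := F)]

variable [Finite F]

theorem ncard_projPoints_sdiff_mul (W U : Submodule F V) :
    (projPoints W \ projPoints U).ncard * (Nat.card F - 1) =
      Nat.card F ^ finrank F W - Nat.card F ^ finrank F ↥(U ⊓ W) := by
  have : Finite V := Module.finite_of_finite F
  have hdiff : projPoints W \ projPoints U = projPoints W \ projPoints (U ⊓ W) := by
    ext P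
    simp only [projPoints, Set.mem_sdiff, Set.mem_ofPred_eq, le_inf_iff]
    tauto
  have hpos : 1 ≤ Nat.card F ^ finrank F ↥(U ⊓ W) := Nat.one_le_pow _ _ Nat.card_pos
  rw [hdiff, Set.ncard_sdiff (projPoints_mono inf_le_right), Nat.sub_mul,
    ncard_projPoints_mul, ncard_projPoints_mul]
  omega

theorem ncard_projPoints_sdiff_of_finrank_add_one {H U : Submodule F V} (hUH : U ≤ H)
    (hrank : finrank F U + 1 = finrank F H) :
    (projPoints H \ projPoints U).ncard = Nat.card F ^ finrank F U := by
  have hq : 1 < Nat.card F := Finite.one_lt_card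
  have h := ncard_projPoints_sdiff_mul H U
  rw [inf_eq_left.2 hUH, ← hrank, pow_succ, ← Nat.mul_sub_one] at h
  exact Nat.eq_of_mul_eq_mul_right (by omega) h

theorem ncard_projPoints_sdiff_le {W U : Submodule F V}
    (hrank : finrank F W ≤ finrank F ↥(U ⊓ W) + 1) :
    (projPoints W \ projPoints U).ncard ≤ Nat.card F ^ (finrank F W - 1) := by
  have hq : 1 < Nat.card F := Finite.one_lt_card
  refine Nat.le_of_mul_le_mul_right ?_ (show 0 < Nat.card F - 1 by omega)
  calc (projPoints W \ projPoints U).ncard * (Nat.card F - 1)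
      = Nat.card F ^ finrank F W - Nat.card F ^ finrank F ↥(U ⊓ W) :=
        ncard_projPoints_sdiff_mul W U
    _ ≤ Nat.card F ^ (finrank F W - 1 + 1) - Nat.card F ^ (finrank F W - 1) :=
        tsub_le_tsub (Nat.pow_le_pow_right hq.le (by omega))
          (Nat.pow_le_pow_right hq.le (by omega))
    _ = Nat.card F ^ (finrank F W - 1) * (Nat.card F - 1) := by
        rw [pow_succ, Nat.mul_sub_one]

theorem ncard_inter_projPoints_sdiff_le {H H' U U' : Submodule F V} (hne : H ≠ H')
    (hrank : finrank F H = finrank F H') (hUH : U ≤ H) (hU : finrank F U + 1 = finrank F H) :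
    ((projPoints H \ projPoints U) ∩ (projPoints H' \ projPoints U')).ncard ≤
      Nat.card F ^ (finrank F H - 2) := by
  have : Finite V := Module.finite_of_finite F
  have hlt := Submodule.finrank_inf_lt_of_ne hne hrank
  calc _ ≤ (projPoints (H ⊓ H') \ projPoints U).ncard := by
        refine Set.ncard_le_ncard ?_
        rintro P ⟨⟨⟨h1, hPH⟩, hPU⟩, ⟨-, hPH'⟩, -⟩
        exact ⟨⟨h1, le_inf hPH hPH'⟩, hPU⟩
    _ ≤ Nat.card F ^ (finrank F ↥(H ⊓ H') - 1) := ncard_projPoints_sdiff_le <|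
        Submodule.finrank_le_finrank_inf_add_one hUH inf_le_left hU.ge
    _ ≤ Nat.card F ^ (finrank F H - 2) := Nat.pow_le_pow_right Nat.card_pos (by omega)

end ProjectivePoints

open Finset in
theorem card_mul_pow_le_ncard_add {F V ι : Type*} [Field F] [Finite F] [AddCommGroup V]
    [Module F V] [FiniteDimensional F V] [Fintype ι] {H U : ι → Submodule F V}
    {S : Set (Submodule F V)} (hH : Function.Injective H)
    (hHV : ∀ i, finrank F (H i) + 1 = finrank F V)
    (hUH : ∀ i, finrank F (U i) + 1 = finrank F (H i)) (hle : ∀ i, U i ≤ H i)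
    (hS : ∀ i, projPoints (H i) \ projPoints (U i) ⊆ S) :
    Fintype.card ι * Nat.card F ^ (finrank F V - 2) ≤
      S.ncard + (Fintype.card ι).choose 2 * Nat.card F ^ (finrank F V - 3) := by
  have : Finite V := Module.finite_of_finite F
  have := Fintype.ofFinite (Submodule F V)
  set q := Nat.card F
  set n := finrank F V
  set A : ι → Finset (Submodule F V) := fun i => (projPoints (H i) \ projPoints (U i)).toFinset
  have hA : ∀ i, #(A i) = q ^ (n - 2) := fun i => by
    rw [← Set.ncard_eq_toFinset_card', ncard_projPoints_sdiff_of_finrank_add_one (hle i) (hUH i)]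
    congr 1
    have := hHV i
    have := hUH i
    omega
  have hAA : ∀ p ∈ (univ : Finset ι).offDiag, #(A p.1 ∩ A p.2) ≤ q ^ (n - 3) := by
    rintro ⟨i, j⟩ hij
    have hne : i ≠ j := (mem_offDiag.1 hij).2.2
    have hHH := Nat.add_right_cancel ((hHV i).trans (hHV j).symm)
    rw [← Set.toFinset_inter, ← Set.ncard_eq_toFinset_card']
    calc _ ≤ q ^ (finrank F (H i) - 2) :=
          ncard_inter_projPoints_sdiff_le (hH.ne hne) hHH (hle i) (hUH i)
      _ = q ^ (n - 3) := by
          have := hHV i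
          congr 1
          omega
  have hunion : #(univ.biUnion A) ≤ S.ncard := by
    rw [← Set.ncard_coe_finset]
    exact Set.ncard_le_ncard (by simpa [A] using hS)
  have hpairs : ∑ p ∈ (univ : Finset ι).offDiag, #(A p.1 ∩ A p.2) ≤
      (Fintype.card ι).choose 2 * 2 * q ^ (n - 3) := by
    have hchoose : (Fintype.card ι).choose 2 * 2 = #(univ : Finset ι).offDiag := by
      rw [offDiag_card, card_univ, ← Nat.mul_sub_one, Nat.choose_two_mul_two]
    rw [hchoose]
    exact sum_le_card_nsmul _ _ _ hAA
  have hbonf := two_mul_sum_card_le A univ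
  rw [sum_congr rfl fun i _ => hA i, sum_const, card_univ, smul_eq_mul] at hbonf
  linarith

section PlaneHyperplanes

variable {F ι : Type*} [Field F] [DecidableEq ι]

def planeFunctional (i₀ i₁ i₂ : ι) (a b : F) : Module.Dual F (ι → F) :=
  LinearMap.proj i₀ - a • LinearMap.proj i₁ - b • LinearMap.proj i₂

variable {i₀ i₁ i₂ : ι} (h₀₁ : i₀ ≠ i₁) (h₀₂ : i₀ ≠ i₂) (h₁₂ : i₁ ≠ i₂)
include h₀₁ h₀₂

theorem planeFunctional_single (a b : F) : planeFunctional i₀ i₁ i₂ a b (Pi.single i₀ 1) = 1 := by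
  simp [planeFunctional, h₀₁.symm, h₀₂.symm]

variable [Fintype ι]

theorem finrank_ker_planeFunctional_add_one (a b : F) :
    finrank F (LinearMap.ker (planeFunctional i₀ i₁ i₂ a b)) + 1 = Fintype.card ι := by
  refine (Module.Dual.finrank_ker_add_one_of_ne_zero fun h => ?_).trans
    (finrank_fintype_fun_eq_card F)
  simpa [h] using planeFunctional_single h₀₁ h₀₂ a b

include h₁₂ in
theorem injective_ker_planeFunctional :
    Function.Injective fun ab : F × F => LinearMap.ker (planeFunctional i₀ i₁ i₂ ab.1 ab.2) := by
  rintro ⟨a, b⟩ ⟨a', b'⟩ h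
  have hsingle := planeFunctional_single (F := F) h₀₁ h₀₂ (i₂ := i₂)
  have heq := Module.Dual.eq_of_ker_eq_of_apply_eq (Pi.single i₀ 1) h
    ((hsingle a b).trans (hsingle a' b').symm) ((hsingle a b).symm ▸ one_ne_zero)
  have ha := LinearMap.congr_fun heq (Pi.single i₁ 1)
  have hb := LinearMap.congr_fun heq (Pi.single i₂ 1)
  simp [planeFunctional, h₀₁, h₀₂, h₁₂, h₁₂.symm] at ha hb
  simp [ha, hb]

end PlaneHyperplanes

theorem exists_hyperplane_flags {F ι κ : Type*} [Field F] [Finite F] [Fintype ι] [Fintype κ]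
    (hι : 3 ≤ Fintype.card ι) (hκ : Fintype.card κ ≤ Nat.card F ^ 2) :
    ∃ H U : κ → Submodule F (ι → F), Function.Injective H ∧
      (∀ i, finrank F (H i) + 1 = Fintype.card ι) ∧
      (∀ i, finrank F (U i) + 1 = finrank F (H i)) ∧ ∀ i, U i ≤ H i := by
  have := Fintype.ofFinite F
  obtain ⟨i₀, i₁, i₂, h₀₁, h₀₂, h₁₂⟩ := Fintype.two_lt_card_iff.1 hι
  obtain ⟨e⟩ : Nonempty (κ ↪ F × F) := Function.Embedding.nonempty_of_card_le <| by
    simpa [sq, Nat.card_eq_fintype_card] using hκ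
  set H : κ → Submodule F (ι → F) :=
    fun i => LinearMap.ker (planeFunctional i₀ i₁ i₂ (e i).1 (e i).2)
  have hH : ∀ i, finrank F (H i) + 1 = Fintype.card ι := fun i =>
    finrank_ker_planeFunctional_add_one h₀₁ h₀₂ _ _
  choose U hUH hU using fun i => (H i).exists_le_finrank_eq (Nat.sub_le (finrank F (H i)) 1)
  refine ⟨H, U, (injective_ker_planeFunctional h₀₁ h₀₂ h₁₂).comp e.injective, hH,
    fun i => ?_, hUH⟩
  have := hH i
  have := hU i
  omega

theorem statement_7_general {F : Type} [Field F] [Fintype F] {q k r : ℕ}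
    (hq : Fintype.card F = q) (hk : 3 ≤ k) :
    alphaQ F k r ≥ r * q ^ (k - 2) - r.choose 2 * q ^ (k - 3) := by
  subst hq
  rw [← Nat.card_eq_fintype_card]
  rcases le_or_gt (r * Nat.card F ^ (k - 2)) (r.choose 2 * Nat.card F ^ (k - 3)) with hle | hlt
  · rw [Nat.sub_eq_zero_of_le hle]
    exact Nat.zero_le _
  have hr : r ≤ Nat.card F ^ 2 := by
    refine Nat.le_sq_of_choose_two_lt Finite.one_lt_card
      (Nat.lt_of_mul_lt_mul_right (a := Nat.card F ^ (k - 3)) ?_)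
    rwa [mul_assoc, ← pow_succ', show k - 3 + 1 = k - 2 by omega]
  obtain ⟨H₀, U₀, hH₀, hH₀k, hU₀H₀, hU₀le⟩ :=
    exists_hyperplane_flags (F := F) (ι := Fin k) (κ := Fin r) (by simpa)
      (by rwa [Fintype.card_fin])
  simp only [Fintype.card_fin] at hH₀k
  unfold alphaQ
  apply le_csInf
  · exact ⟨_, Set.univ, rfl, H₀, U₀, hH₀, fun i => by have := hH₀k i; omega,
      fun i => by have := hH₀k i; have := hU₀H₀ i; omega, hU₀le, fun _ _ _ => trivial⟩
  rintro _ ⟨S, rfl, H, U, hH, hHk, hUk, hle, hcover⟩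
  have := card_mul_pow_le_ncard_add (S := S) hH (fun i => by rw [hHk i, finrank_fin_fun]; omega)
    (fun i => by rw [hHk i, hUk i]; omega) hle
    fun i P hP => hcover P hP.1.1 ⟨i, hP.1.2, fun h => hP.2 ⟨hP.1.1, h⟩⟩
  rw [Fintype.card_fin, finrank_fin_fun] at this
  omega

/-- for every prime power `q`, `k ≥ 3` and `r ≥ 1`,
`α_q(k,r) ≥ r·q^(k-2) - C(r,2)·q^(k-3)`. -/
theorem statement_7 {F : Type} [Field F] [Fintype F] {q k r : ℕ}
    (hq : Fintype.card F = q) (hk : 3 ≤ k) (hr : 1 ≤ r) :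
    alphaQ F k r ≥ r * q ^ (k - 2) - r.choose 2 * q ^ (k - 3) :=
  statement_7_general hq hk
end

section
/- Let C be a projective [n,k]_q code with associated point set 𝒫 in 𝔽_q^k, and let D be an l-dimensional subcode of C with associated subspace W_D of codimension l. Then D is support-minimal if and only if the linear span of the points of 𝒫 contained in W_D equals W_D, i.e., if and only if dim ⟨𝒫 ∩ W_D⟩ = k − l. -/
open scoped Classical
open Matrix

/-- The subspace `W_D ≤ F^k` associated to a subcode `D` of the code generated by `G`:
`W_D = {x | m ⬝ᵥ x = 0 for all m with m ᵥ* G ∈ D}`. -/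
def assocSubspace {F : Type} [Field F] {n k : ℕ} (G : Matrix (Fin k) (Fin n) F)
    (D : Submodule F (Fin n → F)) : Submodule F (Fin k → F) where
  carrier := {x | ∀ m : Fin k → F, Matrix.vecMul m G ∈ D → dotProduct m x = 0}
  add_mem' := by
    intro x y hx hy m hm
    rw [dotProduct_add, hx m hm, hy m hm, add_zero]
  zero_mem' := by
    intro m hm
    exact dotProduct_zero m
  smul_mem' := by
    intro a x hx m hm
    rw [dotProduct_smul, hx m hm, smul_zero]

/-!
A subcode `D` of dimension `l` is support-minimal iff it is all of the subcode of `C` supported on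
`supp D`: if that subcode were larger, its codewords vanishing at one coordinate of `supp D` would
contain an `l`-dimensional subcode of smaller support.

Pulled back along `m ↦ m G`, the subcode supported on `supp D` is the dot-product orthogonal of
the columns outside `supp D`, which are exactly the points of `𝒫` lying in `W_D`, while `D` pulls
back to the orthogonal of `W_D`. Since taking orthogonals is an involution, the two agree iff the
points of `𝒫` in `W_D` span `W_D`.
-/

open Module Submodule

namespace Submodule

variable {K V : Type*} [DivisionRing K] [AddCommGroup V] [Module K V]

lemma exists_le_finrank_eq_of_le_finrank (p : Submodule K V) [FiniteDimensional K p] {l : ℕ}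
    (hl : l ≤ finrank K p) : ∃ q ≤ p, finrank K q = l := by
  let b := Module.finBasis K p
  refine ⟨span K (Set.range fun i : Fin l => (b (Fin.castLE hl i) : V)), ?_, ?_⟩
  · exact span_le.2 <| Set.range_subset_iff.2 fun i => (b _).2
  · rw [finrank_span_eq_card, Fintype.card_fin]
    exact (b.linearIndependent.comp _ (Fin.castLE_injective hl)).map' p.subtype p.ker_subtype

lemma finrank_le_finrank_inf_ker_add_one [FiniteDimensional K V] (p : Submodule K V)
    (f : V →ₗ[K] K) : finrank K p ≤ finrank K ↥(p ⊓ LinearMap.ker f) + 1 := by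
  have h₁ := finrank_sup_add_finrank_inf_eq p (LinearMap.ker f)
  have h₂ := LinearMap.finrank_range_add_finrank_ker f
  have h₃ := (p ⊔ LinearMap.ker f).finrank_le
  have h₄ := (LinearMap.range f).finrank_le.trans_eq (finrank_self K)
  omega

lemma comap_eq_comap_iff_of_le_range {W : Type*} [AddCommGroup W] [Module K W]
    {f : V →ₗ[K] W} {p q : Submodule K W} (hp : p ≤ LinearMap.range f)
    (hq : q ≤ LinearMap.range f) : p.comap f = q.comap f ↔ p = q := by
  simp only [le_antisymm_iff, comap_le_comap_iff_of_le_range hp, comap_le_comap_iff_of_le_range hq]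

end Submodule

section SupportedSubcode

variable {F : Type} [Field F] {n : ℕ}

def supportedSubcode (C : Submodule F (Fin n → F)) (S : Set (Fin n)) :
    Submodule F (Fin n → F) :=
  C ⊓ Submodule.pi Sᶜ fun _ => (⊥ : Submodule F F)

variable {C D : Submodule F (Fin n → F)} {S T : Set (Fin n)}

lemma mem_supportedSubcode {c : Fin n → F} :
    c ∈ supportedSubcode C S ↔ c ∈ C ∧ ∀ i ∉ S, c i = 0 := by
  simp only [supportedSubcode, mem_inf, mem_pi, Set.mem_compl_iff, mem_bot]

lemma supportedSubcode_le : supportedSubcode C S ≤ C := inf_le_left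

lemma supportedSubcode_mono (h : S ⊆ T) : supportedSubcode C S ≤ supportedSubcode C T :=
  fun _ hc => mem_supportedSubcode.2
    ⟨(mem_supportedSubcode.1 hc).1, fun i hi => (mem_supportedSubcode.1 hc).2 i (hi ∘ @h i)⟩

lemma subcodeSupp_subset_of_le_supportedSubcode (h : D ≤ supportedSubcode C S) :
    subcodeSupp D ⊆ S := fun i ⟨_, hv, hvi⟩ =>
  by_contra fun hi => hvi ((mem_supportedSubcode.1 (h hv)).2 i hi)

lemma le_supportedSubcode_subcodeSupp (hD : D ≤ C) : D ≤ supportedSubcode C (subcodeSupp D) :=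
  fun v hv => mem_supportedSubcode.2 ⟨hD hv, fun _ hi => by_contra fun h => hi ⟨v, hv, h⟩⟩

lemma exists_subcodeSupp_ssubset_of_lt_supportedSubcode
    (hlt : D < supportedSubcode C (subcodeSupp D)) :
    ∃ D' ≤ C, finrank F D' = finrank F D ∧ subcodeSupp D' ⊂ subcodeSupp D := by
  set E := supportedSubcode C (subcodeSupp D)
  obtain ⟨c, hcE, hcD⟩ := SetLike.exists_of_lt hlt
  obtain ⟨i, hci⟩ := Function.ne_iff.1 (ne_of_mem_of_not_mem (zero_mem D) hcD).symm
  have hi : i ∈ subcodeSupp D := by_contra fun h => hci ((mem_supportedSubcode.1 hcE).2 i h)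
  have hrank : finrank F D ≤ finrank F ↥(E ⊓ LinearMap.ker (LinearMap.proj i)) := by
    have := finrank_lt_finrank_of_lt hlt
    have := E.finrank_le_finrank_inf_ker_add_one (LinearMap.proj i)
    omega
  obtain ⟨D', hD'E, hD'⟩ := exists_le_finrank_eq_of_le_finrank _ hrank
  refine ⟨D', fun v hv => supportedSubcode_le (hD'E hv).1, hD', ?_⟩
  have hsub := subcodeSupp_subset_of_le_supportedSubcode fun v hv => (hD'E hv).1
  refine (Set.ssubset_iff_of_subset hsub).2 ⟨i, hi, ?_⟩
  rintro ⟨v, hv, hvi⟩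
  exact hvi (hD'E hv).2

theorem isSupportMinimal_iff_supportedSubcode_eq {l : ℕ} (hD : D ≤ C)
    (hDl : finrank F D = l) : IsSupportMinimal C D l ↔ supportedSubcode C (subcodeSupp D) = D := by
  subst hDl
  constructor
  · rintro ⟨-, -, hmin⟩
    refine (((le_supportedSubcode_subcodeSupp hD).lt_or_eq).resolve_left fun hlt => ?_).symm
    obtain ⟨D', hD'C, hD', hss⟩ := exists_subcodeSupp_ssubset_of_lt_supportedSubcode hlt
    exact hmin D' hD'C hD' hss
  · refine fun hE => ⟨hD, rfl, fun D' hD'C hD' hss => ?_⟩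
    have hD'D : D' ≤ D := hE ▸ (le_supportedSubcode_subcodeSupp hD'C).trans
      (supportedSubcode_mono hss.subset)
    exact hss.ne (congrArg subcodeSupp (eq_of_le_of_finrank_eq hD'D hD'))

end SupportedSubcode

section Orthogonal

open LinearMap (BilinForm)

variable {F ι : Type*} [Field F] [Fintype ι]

lemma dotProductBilin_isRefl : BilinForm.IsRefl (dotProductBilin F F : BilinForm F (ι → F)) :=
  fun x y h => by rwa [dotProductBilin_apply_apply, dotProduct_comm] at h

lemma dotProductBilin_nondegenerate :
    BilinForm.Nondegenerate (dotProductBilin F F : BilinForm F (ι → F)) :=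
  (LinearMap.IsRefl.nondegenerate_iff_separatingLeft (dotProductBilin_isRefl (F := F) (ι := ι))).2
    fun m hm => dotProduct_eq_zero m hm

lemma orthogonal_dotProductBilin_eq_iff {V M : Submodule F (ι → F)} :
    BilinForm.orthogonal (dotProductBilin F F) V = M ↔
      V = BilinForm.orthogonal (dotProductBilin F F) M := by
  have := BilinForm.orthogonal_orthogonal (dotProductBilin_nondegenerate (F := F) (ι := ι))
    dotProductBilin_isRefl
  constructor <;> rintro rfl <;> simp only [this]

end Orthogonal

section GeneratorMatrix

open LinearMap (BilinForm)

variable {F : Type} [Field F] {n k : ℕ} (G : Matrix (Fin k) (Fin n) F)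
  {D : Submodule F (Fin n → F)}

lemma assocSubspace_eq_orthogonal :
    assocSubspace G D =
      BilinForm.orthogonal (dotProductBilin F F) (D.comap G.vecMulLinear) := by
  ext x
  rfl

lemma col_mem_assocSubspace_iff (hD : D ≤ LinearMap.range G.vecMulLinear) (j : Fin n) :
    Gᵀ j ∈ assocSubspace G D ↔ j ∉ subcodeSupp D := by
  constructor
  · rintro hj ⟨v, hv, hvj⟩
    obtain ⟨m, rfl⟩ := hD hv
    exact hvj (hj m hv)
  · exact fun hj m hm => by_contra fun h => hj ⟨_, hm, h⟩

lemma setOf_col_mem_assocSubspace (hD : D ≤ LinearMap.range G.vecMulLinear) :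
    {x : Fin k → F | (∃ i : Fin n, x = Gᵀ i) ∧ x ∈ assocSubspace G D} =
      Gᵀ '' (subcodeSupp D)ᶜ := by
  ext x
  constructor
  · rintro ⟨⟨j, rfl⟩, hj⟩
    exact ⟨j, (col_mem_assocSubspace_iff G hD j).1 hj, rfl⟩
  · rintro ⟨j, hj, rfl⟩
    exact ⟨⟨j, rfl⟩, (col_mem_assocSubspace_iff G hD j).2 hj⟩

lemma comap_supportedSubcode_eq_orthogonal (S : Set (Fin n)) :
    (supportedSubcode (LinearMap.range G.vecMulLinear) S).comap G.vecMulLinear =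
      BilinForm.orthogonal (dotProductBilin F F) (span F (Gᵀ '' Sᶜ)) := by
  ext m
  have hcol (i : Fin n) : (dotProductBilin F F).flip m (Gᵀ i) = G.vecMulLinear m i :=
    dotProduct_comm (Gᵀ i) m
  change _ ↔ span F (Gᵀ '' Sᶜ) ≤ LinearMap.ker ((dotProductBilin F F).flip m)
  rw [mem_comap, mem_supportedSubcode, span_le]
  simp only [LinearMap.mem_range_self, true_and]
  exact ⟨fun h _ ⟨i, hi, hx⟩ => hx ▸ (hcol i).trans (h i hi),
    fun h i hi => (hcol i).symm.trans (h ⟨i, hi, rfl⟩)⟩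

end GeneratorMatrix

theorem statement_13_general {F : Type} [Field F] {n k l : ℕ}
    (G : Matrix (Fin k) (Fin n) F)
    (D : Submodule F (Fin n → F)) (hD : D ≤ LinearMap.range G.vecMulLinear)
    (hDl : Module.finrank F D = l) :
    IsSupportMinimal (LinearMap.range G.vecMulLinear) D l ↔
      Submodule.span F
        {x : Fin k → F | (∃ i : Fin n, x = Gᵀ i) ∧ x ∈ assocSubspace G D} =
        assocSubspace G D := by
  rw [isSupportMinimal_iff_supportedSubcode_eq hD hDl,
    ← comap_eq_comap_iff_of_le_range supportedSubcode_le hD, comap_supportedSubcode_eq_orthogonal,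
    setOf_col_mem_assocSubspace G hD, assocSubspace_eq_orthogonal,
    orthogonal_dotProductBilin_eq_iff]

/-- an `l`-dimensional subcode `D` of a projective `[n,k]_q` code with
generator matrix `G` is support-minimal iff the span of the points of `𝒫` (the columns
of `G`) contained in the associated codimension-`l` subspace `W_D` equals `W_D`. -/
theorem statement_13 {F : Type} [Field F] [Fintype F] {n k l : ℕ}
    (G : Matrix (Fin k) (Fin n) F)
    (hrank : Module.finrank F (LinearMap.range G.vecMulLinear) = k)
    (hproj : IsProjective (LinearMap.range G.vecMulLinear))
    (D : Submodule F (Fin n → F)) (hD : D ≤ LinearMap.range G.vecMulLinear)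
    (hDl : Module.finrank F D = l)
    (hW : Module.finrank F (assocSubspace G D) = k - l) :
    IsSupportMinimal (LinearMap.range G.vecMulLinear) D l ↔
      Submodule.span F
        {x : Fin k → F | (∃ i : Fin n, x = Gᵀ i) ∧ x ∈ assocSubspace G D} =
        assocSubspace G D :=
  statement_13_general G D hD hDl
end

section
/- Let C be a projective [n,k]_q code and let l, r be integers with 1 ≤ l ≤ k and 1 ≤ r ≤ [k choose l]_q. If n > [k choose l]_q − α^l_q(k,r), then M^l(C) > [k choose l]_q − r, where [k choose l]_q denotes the Gaussian binomial coefficient. -/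
open scoped Classical
open Matrix

/-!
Work in the dual space `C^* ≅ F^k`. Coordinate `i` gives the column point `⟨eᵢ⟩`, where `eᵢ` is
the `i`-th coordinate functional, and an `l`-dimensional subcode `D` gives its annihilator `W(D)`,
of codimension `l`; `eᵢ ∈ W(D)` iff `i ∉ supp D`, and `D ↦ W(D)` is injective. Projectivity makes
the `n` column points distinct.

If `M^l(C) ≤ [k l]_q - r`, then `r` subcodes `Dⱼ` are not support-minimal, witnessed by `D'ⱼ` with
`supp D'ⱼ ⊊ supp Dⱼ`. Choose `Uⱼ` of codimension `l + 1` with `W(Dⱼ) ∩ W(D'ⱼ) ≤ Uⱼ ≤ W(Dⱼ)`.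
A column point on `W(Dⱼ)` lies on `W(D'ⱼ)`, hence on `Uⱼ`, so the points that are not column
points form a set as in the definition of `α`. Hence `α ≤ [k 1]_q - n ≤ [k l]_q - n`, contradicting
the bound on `n`. When `l = k`, `C` itself is support-minimal.
-/

open Module

section GaussBinomArith

variable {q : ℕ}

lemma prod_range_pow_sub_pow {c l : ℕ} (hlc : l ≤ c) :
    ∏ i ∈ Finset.range l, (q ^ c - q ^ i)
      = (∏ i ∈ Finset.range l, (q ^ (c - i) - 1)) * q ^ (∑ i ∈ Finset.range l, i) := by
  rw [← Finset.prod_pow_eq_pow_sum, ← Finset.prod_mul_distrib]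
  refine Finset.prod_congr rfl fun i hi => ?_
  have hic : i ≤ c := (Finset.mem_range.mp hi).le.trans hlc
  rw [Nat.sub_mul, one_mul, ← pow_add, Nat.sub_add_cancel hic]

lemma prod_range_pow_sub_one_reflect (c l : ℕ) :
    ∏ i ∈ Finset.range l, (q ^ (c + l - i) - 1)
      = ∏ i ∈ Finset.range l, (q ^ (c + i + 1) - 1) := by
  rw [← Finset.prod_range_reflect]
  refine Finset.prod_congr rfl fun i hi => ?_
  have := Finset.mem_range.mp hi
  congr 2
  omega

lemma prod_range_pow_succ_sub_one_pos (hq : 2 ≤ q) (l : ℕ) :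
    0 < ∏ i ∈ Finset.range l, (q ^ (i + 1) - 1) :=
  Finset.prod_pos fun i _ => Nat.sub_pos_of_lt (Nat.one_lt_pow (Nat.succ_ne_zero i) hq)

lemma pow_sub_one_mul_prod_le_mul_prod (hq : 0 < q) {k l : ℕ} (hl : 1 ≤ l) (hlk : l < k) :
    (q ^ k - 1) * ∏ i ∈ Finset.range l, (q ^ (i + 1) - 1)
      ≤ (q - 1) * ∏ i ∈ Finset.range l, (q ^ (k - i) - 1) := by
  obtain ⟨m, rfl⟩ : ∃ m, l = m + 1 := ⟨l - 1, by omega⟩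
  obtain ⟨c, rfl⟩ : ∃ c, k = c + m + 1 := ⟨k - m - 1, by omega⟩
  rw [Finset.prod_range_succ', Finset.prod_range_succ']
  have hshift : ∏ i ∈ Finset.range m, (q ^ (c + m + 1 - (i + 1)) - 1)
      = ∏ i ∈ Finset.range m, (q ^ (c + m - i) - 1) :=
    Finset.prod_congr rfl fun i _ => by congr 2; omega
  have hterm : ∏ i ∈ Finset.range m, (q ^ (i + 1 + 1) - 1)
      ≤ ∏ i ∈ Finset.range m, (q ^ (c + i + 1) - 1) :=
    Finset.prod_le_prod' fun i _ => Nat.sub_le_sub_right (Nat.pow_le_pow_right hq (by omega)) 1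
  rw [hshift, prod_range_pow_sub_one_reflect, zero_add, pow_one, Nat.sub_zero]
  have := Nat.mul_le_mul_left ((q ^ (c + m + 1) - 1) * (q - 1)) hterm
  linarith

end GaussBinomArith

instance Submodule.finite_of_finite {K V : Type*} [Semiring K] [AddCommMonoid V] [Module K V]
    [Finite V] : Finite (Submodule K V) :=
  Finite.of_injective _ SetLike.coe_injective

section SubspaceCount

variable {F V : Type*} [Field F] [Fintype F] [AddCommGroup V] [Module F V] [FiniteDimensional F V]

def spanFiberEquiv {l : ℕ} (W : Submodule F V) (hW : finrank F W = l) :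
    {s : {s : Fin l → V // LinearIndependent F s} // Submodule.span F (Set.range s.1) = W}
      ≃ {t : Fin l → W // LinearIndependent F t} where
  toFun s := ⟨fun i => ⟨s.1.1 i, s.2.le (Submodule.subset_span (Set.mem_range_self i))⟩,
    s.1.2.of_comp W.subtype⟩
  invFun t := ⟨⟨fun i => t.1 i, t.2.map' W.subtype (Submodule.ker_subtype W)⟩, by
    have hspan : Submodule.span F (Set.range t.1) = ⊤ :=
      t.2.span_eq_top_of_card_eq_finrank' (by simp [hW])
    rw [show Set.range (fun i => (t.1 i : V)) = W.subtype '' Set.range t.1 by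
      rw [← Set.range_comp]; rfl, ← Submodule.map_span, hspan, Submodule.map_top,
      Submodule.range_subtype]⟩
  left_inv _ := rfl
  right_inv _ := rfl

theorem card_finrank_eq_mul_prod {l : ℕ} (hl : l ≤ finrank F V) :
    Nat.card {W : Submodule F V // finrank F W = l}
        * ∏ i ∈ Finset.range l, (Fintype.card F ^ l - Fintype.card F ^ i)
      = ∏ i ∈ Finset.range l, (Fintype.card F ^ finrank F V - Fintype.card F ^ i) := by
  have : Finite V := Module.finite_of_finite F
  let span (s : {s : Fin l → V // LinearIndependent F s}) :
      {W : Submodule F V // finrank F W = l} :=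
    ⟨Submodule.span F (Set.range s.1), by rw [finrank_span_eq_card s.2, Fintype.card_fin]⟩
  have hfiber : ∀ W, Nat.card {s // span s = W}
      = ∏ i ∈ Finset.range l, (Fintype.card F ^ l - Fintype.card F ^ i) := by
    intro W
    rw [Nat.card_congr ((Equiv.subtypeEquivRight fun s => Subtype.ext_iff).trans
      (spanFiberEquiv W.1 W.2)), card_linearIndependent W.2.ge, W.2]
    exact Fin.prod_univ_eq_prod_range (fun i => Fintype.card F ^ l - Fintype.card F ^ i) l
  have : Fintype {W : Submodule F V // finrank F W = l} := Fintype.ofFinite _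
  rw [← Fin.prod_univ_eq_prod_range (fun i => Fintype.card F ^ finrank F V - Fintype.card F ^ i),
    ← card_linearIndependent hl, Nat.card_congr (Equiv.sigmaFiberEquiv span).symm, Nat.card_sigma,
    Finset.sum_congr rfl fun W _ => hfiber W, Finset.sum_const, smul_eq_mul, Finset.card_univ,
    Nat.card_eq_fintype_card]

theorem card_finrank_eq_mul_gaussBinom_denom {l : ℕ} (hl : l ≤ finrank F V) :
    Nat.card {W : Submodule F V // finrank F W = l}
        * ∏ i ∈ Finset.range l, (Fintype.card F ^ (i + 1) - 1)
      = ∏ i ∈ Finset.range l, (Fintype.card F ^ (finrank F V - i) - 1) := by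
  have h := card_finrank_eq_mul_prod (F := F) hl
  rw [prod_range_pow_sub_pow le_rfl, prod_range_pow_sub_pow hl, ← mul_assoc] at h
  have hreflect := prod_range_pow_sub_one_reflect (q := Fintype.card F) 0 l
  simp only [zero_add] at hreflect
  rw [hreflect] at h
  exact Nat.eq_of_mul_eq_mul_right (Nat.pow_pos Fintype.card_pos) h

theorem card_finrank_eq_gaussBinom (l : ℕ) :
    Nat.card {W : Submodule F V // finrank F W = l}
      = gaussBinom (Fintype.card F) (finrank F V) l := by
  rcases le_or_gt l (finrank F V) with hl | hl
  · rw [gaussBinom, ← card_finrank_eq_mul_gaussBinom_denom hl, Nat.mul_div_cancel _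
      (prod_range_pow_succ_sub_one_pos Fintype.one_lt_card l)]
  · have : IsEmpty {W : Submodule F V // finrank F W = l} :=
      ⟨fun W => absurd W.1.finrank_le (by rw [W.2]; omega)⟩
    rw [Nat.card_of_isEmpty, gaussBinom, Finset.prod_eq_zero (Finset.mem_range.mpr hl) (by simp),
      Nat.zero_div]

theorem ncard_setOf_finrank_eq (l : ℕ) :
    {P : Submodule F V | finrank F P = l}.ncard = gaussBinom (Fintype.card F) (finrank F V) l :=
  (Nat.card_coe_set_eq _).symm.trans (card_finrank_eq_gaussBinom l)

end SubspaceCount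

theorem gaussBinom_self {q : ℕ} (hq : 2 ≤ q) (k : ℕ) : gaussBinom q k k = 1 := by
  have hreflect := prod_range_pow_sub_one_reflect (q := q) 0 k
  simp only [zero_add] at hreflect
  rw [gaussBinom, hreflect, Nat.div_self (prod_range_pow_succ_sub_one_pos hq k)]

theorem gaussBinom_one_le_gaussBinom (F : Type*) [Field F] [Fintype F] {k l : ℕ} (hl : 1 ≤ l)
    (hlk : l < k) : gaussBinom (Fintype.card F) k 1 ≤ gaussBinom (Fintype.card F) k l := by
  have hk : finrank F (Fin k → F) = k := finrank_fin_fun F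
  have h1 := card_finrank_eq_mul_gaussBinom_denom (F := F) (V := Fin k → F) (l := 1) (by omega)
  have hl' := card_finrank_eq_mul_gaussBinom_denom (F := F) (V := Fin k → F) (l := l) (by omega)
  rw [← hk, ← card_finrank_eq_gaussBinom, ← card_finrank_eq_gaussBinom]
  rw [hk] at h1 hl'
  simp only [Finset.prod_range_one, zero_add, pow_one, Nat.sub_zero] at h1
  set q := Fintype.card F
  set N₁ := Nat.card {W : Submodule F (Fin k → F) // finrank F W = 1}
  set Nₗ := Nat.card {W : Submodule F (Fin k → F) // finrank F W = l}
  set D := ∏ i ∈ Finset.range l, (q ^ (i + 1) - 1)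
  have hq : 2 ≤ q := Fintype.one_lt_card
  refine Nat.le_of_mul_le_mul_right ?_
    (Nat.mul_pos (by omega : 0 < q - 1) (prod_range_pow_succ_sub_one_pos hq l))
  calc N₁ * ((q - 1) * D) = (q ^ k - 1) * D := by rw [← h1]; ring
    _ ≤ (q - 1) * ∏ i ∈ Finset.range l, (q ^ (k - i) - 1) :=
      pow_sub_one_mul_prod_le_mul_prod (by omega) hl hlk
    _ = Nₗ * ((q - 1) * D) := by rw [← hl']; ring

theorem Submodule.exists_le_le_finrank_eq {K V : Type*} [Field K] [AddCommGroup V] [Module K V]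
    [FiniteDimensional K V] {A B : Submodule K V} (hAB : A ≤ B) {m : ℕ}
    (hA : finrank K A ≤ m) (hB : m ≤ finrank K B) :
    ∃ U : Submodule K V, A ≤ U ∧ U ≤ B ∧ finrank K U = m := by
  obtain ⟨d, hd⟩ : ∃ d, m - finrank K A = d := ⟨_, rfl⟩
  induction d generalizing A with
  | zero => exact ⟨A, le_rfl, hAB, by omega⟩
  | succ d ih =>
    obtain ⟨x, hxB, hxA⟩ := SetLike.exists_of_lt (lt_of_le_of_ne hAB (by rintro rfl; omega))
    have hdisj : A ⊓ K ∙ x = ⊥ := by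
      rw [eq_bot_iff]
      rintro y ⟨hyA, hyx⟩
      obtain ⟨c, rfl⟩ := Submodule.mem_span_singleton.mp hyx
      rcases eq_or_ne c 0 with rfl | hc
      · simp
      · exact absurd ((Submodule.smul_mem_iff A hc).mp hyA) hxA
    have hfinrank : finrank K ↥(A ⊔ K ∙ x) = finrank K A + 1 := by
      have := Submodule.finrank_sup_add_finrank_inf_eq A (K ∙ x)
      rw [hdisj, finrank_span_singleton (ne_of_mem_of_not_mem A.zero_mem hxA).symm] at this
      simpa using this
    obtain ⟨U, hU, hUB, hUm⟩ :=
      ih (sup_le hAB ((Submodule.span_singleton_le_iff_mem x B).mpr hxB)) (by omega) (by omega)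
    exact ⟨U, le_sup_left.trans hU, hUB, hUm⟩

theorem alphaL_le_ncard {F : Type} {V : Type*} [Field F] [Fintype F] [AddCommGroup V] [Module F V]
    {k l r : ℕ} (e : V ≃ₗ[F] (Fin k → F)) (S : Set (Submodule F V))
    (W U : Fin r → Submodule F V) (hW : Function.Injective W)
    (hWk : ∀ i, finrank F (W i) = k - l) (hUk : ∀ i, finrank F (U i) = k - (l + 1))
    (hUW : ∀ i, U i ≤ W i)
    (hS : ∀ P : Submodule F V, finrank F P = 1 →
      (∃ i, P ≤ W i ∧ ¬ P ≤ U i) → P ∈ S) :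
    alphaL F k l r ≤ S.ncard := by
  let E := Submodule.orderIsoMapComap e
  have hE : ∀ P, finrank F (E P) = finrank F P := fun P => e.finrank_map_eq P
  refine Nat.sInf_le ⟨E '' S, Set.ncard_image_of_injective S E.injective, E ∘ W, E ∘ U,
    E.injective.comp hW, fun i => (hE _).trans (hWk i), fun i => (hE _).trans (hUk i),
    fun i => E.monotone (hUW i),
    fun P hP ⟨i, hPW, hPU⟩ => ⟨E.symm P, ?_, E.apply_symm_apply P⟩⟩
  refine hS _ ((hE _).symm.trans (by rwa [E.apply_symm_apply])) ⟨i, ?_, ?_⟩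
  · exact E.symm_apply_le.mpr hPW
  · exact fun h => hPU (E.symm_apply_le.mp h)

section SubcodeDuality

variable {F : Type} [Field F] {n : ℕ}

def coordFunctional (C : Submodule F (Fin n → F)) (i : Fin n) : Module.Dual F C :=
  (LinearMap.proj i).comp C.subtype

def subcodeAnnihilator (C D : Submodule F (Fin n → F)) : Submodule F (Module.Dual F C) :=
  (D.comap C.subtype).dualAnnihilator

variable {C D : Submodule F (Fin n → F)}

theorem coordFunctional_mem_subcodeAnnihilator_iff (hD : D ≤ C) (i : Fin n) :
    coordFunctional C i ∈ subcodeAnnihilator C D ↔ i ∉ subcodeSupp D := by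
  simp only [subcodeAnnihilator, Submodule.mem_dualAnnihilator, Submodule.mem_comap,
    coordFunctional, subcodeSupp]
  constructor
  · rintro h ⟨v, hv, hvi⟩
    exact hvi (h ⟨v, hD hv⟩ hv)
  · intro h w hw
    by_contra hwi
    exact h ⟨w, hw, hwi⟩

theorem finrank_subcodeAnnihilator (hD : D ≤ C) :
    finrank F (subcodeAnnihilator C D) = finrank F C - finrank F D := by
  have := Subspace.finrank_add_finrank_dualAnnihilator_eq (D.comap C.subtype)
  rw [(Submodule.comapSubtypeEquivOfLe hD).finrank_eq] at this
  rw [subcodeAnnihilator]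
  omega

theorem subcodeAnnihilator_injOn {D₁ D₂ : Submodule F (Fin n → F)} (h₁ : D₁ ≤ C)
    (h₂ : D₂ ≤ C) (h : subcodeAnnihilator C D₁ = subcodeAnnihilator C D₂) :
    D₁ = D₂ := by
  have := congrArg (Submodule.map C.subtype) (Subspace.dualAnnihilator_inj.mp h)
  rwa [Submodule.map_comap_subtype, Submodule.map_comap_subtype, inf_eq_right.mpr h₁,
    inf_eq_right.mpr h₂] at this

variable (C) in
def columnPoints : Set (Submodule F (Module.Dual F C)) :=
  Set.range fun i => F ∙ coordFunctional C i

theorem IsProjective.coordFunctional_ne_zero (hC : IsProjective C) (i : Fin n) :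
    coordFunctional C i ≠ 0 := by
  obtain ⟨c, hc, hci⟩ := hC.1 i
  exact fun h => hci (LinearMap.congr_fun h ⟨c, hc⟩)

theorem IsProjective.ncard_columnPoints (hC : IsProjective C) : (columnPoints C).ncard = n := by
  have hinj : Function.Injective fun i => F ∙ coordFunctional C i := by
    intro i j hij
    by_contra hne
    obtain ⟨a, ha⟩ := (Submodule.span_singleton_eq_span_singleton).mp hij
    refine hC.2 i j hne ⟨a, a.ne_zero, fun c hc => ?_⟩
    simpa [coordFunctional, Units.smul_def] using (LinearMap.congr_fun ha ⟨c, hc⟩).symm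
  rw [columnPoints, ← Nat.card_coe_set_eq, Nat.card_range_of_injective hinj, Nat.card_fin]

theorem IsProjective.columnPoints_subset (hC : IsProjective C) :
    columnPoints C ⊆ {P | finrank F P = 1} := by
  rintro _ ⟨i, rfl⟩
  exact finrank_span_singleton (hC.coordFunctional_ne_zero i)

theorem IsProjective.le_gaussBinom_one [Fintype F] (hC : IsProjective C) :
    n ≤ gaussBinom (Fintype.card F) (finrank F C) 1 := by
  have : Finite (Module.Dual F C) := Module.finite_of_finite F
  calc n = (columnPoints C).ncard := hC.ncard_columnPoints.symm
    _ ≤ {P : Submodule F (Module.Dual F C) | finrank F P = 1}.ncard :=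
      Set.ncard_le_ncard hC.columnPoints_subset
    _ = gaussBinom (Fintype.card F) (finrank F C) 1 := by
      rw [ncard_setOf_finrank_eq, Subspace.dual_finrank_eq]

end SubcodeDuality

section SupportMinimal

variable {F : Type} [Field F] {n : ℕ} {C : Submodule F (Fin n → F)}

theorem isSupportMinimal_self : IsSupportMinimal C C (finrank F C) :=
  ⟨le_rfl, rfl, fun _ hD' hD'C hss =>
    hss.ne (by rw [Submodule.eq_of_le_of_finrank_eq hD' hD'C])⟩

variable [Fintype F]

theorem card_subcodes_finrank_eq (l : ℕ) :
    Nat.card {D : Submodule F (Fin n → F) // D ≤ C ∧ finrank F D = l}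
      = gaussBinom (Fintype.card F) (finrank F C) l := by
  rw [← card_finrank_eq_gaussBinom (V := C) l]
  refine (Nat.card_congr
    (((Submodule.MapSubtype.orderIso C).toEquiv.subtypeEquiv fun W => ?_).trans
      (Equiv.subtypeSubtypeEquivSubtypeInter (· ≤ C) (finrank F · = l)))).symm
  change _ ↔ finrank F (W.map C.subtype) = l
  rw [Submodule.finrank_map_subtype_eq]

theorem exists_injective_not_isSupportMinimal {l r : ℕ}
    (hr : r + numSupportMinimal C l ≤ gaussBinom (Fintype.card F) (finrank F C) l) :
    ∃ D : Fin r → Submodule F (Fin n → F), Function.Injective D ∧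
      ∀ j, D j ≤ C ∧ finrank F (D j) = l ∧ ¬ IsSupportMinimal C (D j) l := by
  set A := {D : Submodule F (Fin n → F) | D ≤ C ∧ finrank F D = l}
  set B := {D : Submodule F (Fin n → F) | IsSupportMinimal C D l}
  have hsplit := Set.ncard_sdiff_add_ncard_of_subset (s := B) (t := A)
    (fun D hD => ⟨hD.1, hD.2.1⟩) (Set.toFinite A)
  have hA : A.ncard = gaussBinom (Fintype.card F) (finrank F C) l :=
    (Nat.card_coe_set_eq A).symm.trans (card_subcodes_finrank_eq l)
  have hB : B.ncard = numSupportMinimal C l := (Nat.card_coe_set_eq B).symm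
  obtain ⟨T, hTA, hTr⟩ := Set.exists_subset_card_eq (s := A \ B) (n := r) (by omega)
  let e := Finite.equivFinOfCardEq (α := T) ((Nat.card_coe_set_eq T).trans hTr)
  refine ⟨fun j => (e.symm j).1, Subtype.val_injective.comp e.symm.injective, fun j => ?_⟩
  obtain ⟨⟨hDC, hDl⟩, hD⟩ := hTA (e.symm j).2
  exact ⟨hDC, hDl, hD⟩

end SupportMinimal

theorem alphaL_le_gaussBinom_one_sub {F : Type} [Field F] [Fintype F] {n k l r : ℕ}
    {C : Submodule F (Fin n → F)} (hC : IsProjective C) (hk : finrank F C = k)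
    (D : Fin r → Submodule F (Fin n → F)) (hDinj : Function.Injective D)
    (hD : ∀ j, D j ≤ C ∧ finrank F (D j) = l ∧ ¬ IsSupportMinimal C (D j) l) :
    alphaL F k l r ≤ gaussBinom (Fintype.card F) k 1 - n := by
  choose hDC hDl hDmin using hD
  have hD' : ∀ j, ∃ D', D' ≤ C ∧ finrank F D' = l ∧
      subcodeSupp D' ⊂ subcodeSupp (D j) := fun j => by
    simpa [IsSupportMinimal, hDC j, hDl j] using hDmin j
  choose D' hD'C hD'l hD'supp using hD'
  let W j := subcodeAnnihilator C (D j)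
  let W' j := subcodeAnnihilator C (D' j)
  have hWk : ∀ j, finrank F (W j) = k - l := fun j => by
    rw [finrank_subcodeAnnihilator (hDC j), hk, hDl j]
  have hW'k : ∀ j, finrank F (W' j) = k - l := fun j => by
    rw [finrank_subcodeAnnihilator (hD'C j), hk, hD'l j]
  have hU : ∀ j, ∃ U, W j ⊓ W' j ≤ U ∧ U ≤ W j ∧ finrank F U = k - (l + 1) := by
    intro j
    have hne : W j ≠ W' j := fun h =>
      (hD'supp j).ne (congrArg subcodeSupp (subcodeAnnihilator_injOn (hD'C j) (hDC j) h.symm))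
    have hlt : W j ⊓ W' j < W j := inf_lt_left.mpr fun hle =>
      hne (Submodule.eq_of_le_of_finrank_eq hle ((hWk j).trans (hW'k j).symm))
    have := Submodule.finrank_lt_finrank_of_lt hlt
    have := hWk j
    exact Submodule.exists_le_le_finrank_eq inf_le_left (by omega) (by omega)
  choose U hWU hUW hUk using hU
  obtain ⟨e⟩ : Nonempty (Module.Dual F C ≃ₗ[F] (Fin k → F)) :=
    FiniteDimensional.nonempty_linearEquiv_of_finrank_eq (by simp [hk])
  let S := {P : Submodule F (Module.Dual F C) | finrank F P = 1} \ columnPoints C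
  calc alphaL F k l r ≤ S.ncard := by
        refine alphaL_le_ncard e _ W U (fun j j' h => hDinj (subcodeAnnihilator_injOn (hDC j)
          (hDC j') h)) hWk hUk hUW ?_
        rintro P hP ⟨j, hPW, hPU⟩
        refine ⟨hP, ?_⟩
        rintro ⟨i, rfl⟩
        have hi : coordFunctional C i ∈ W j := hPW (Submodule.mem_span_singleton_self _)
        have hi' : i ∉ subcodeSupp (D' j) := fun h =>
          (coordFunctional_mem_subcodeAnnihilator_iff (hDC j) i).mp hi ((hD'supp j).subset h)
        exact hPU ((Submodule.span_singleton_le_iff_mem _ _).mpr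
          (hWU j ⟨hi, (coordFunctional_mem_subcodeAnnihilator_iff (hD'C j) i).mpr hi'⟩))
    _ = gaussBinom (Fintype.card F) k 1 - n := by
        have : Finite (Module.Dual F C) := Module.finite_of_finite F
        rw [Set.ncard_sdiff hC.columnPoints_subset, hC.ncard_columnPoints,
          ncard_setOf_finrank_eq, Subspace.dual_finrank_eq, hk]

/-- if `C` is a projective `[n,k]_q` code, `1 ≤ l ≤ k`,
`1 ≤ r ≤ [k choose l]_q` and `n > [k choose l]_q - α^l_q(k,r)`, then
`M^l(C) > [k choose l]_q - r`. -/
theorem statement_15 {F : Type} [Field F] [Fintype F] {q n k l r : ℕ}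
    (hq : Fintype.card F = q)
    (C : Submodule F (Fin n → F)) (hk : Module.finrank F C = k)
    (hproj : IsProjective C)
    (hl1 : 1 ≤ l) (hlk : l ≤ k)
    (hr1 : 1 ≤ r) (hr2 : r ≤ gaussBinom q k l)
    (hn : n > gaussBinom q k l - alphaL F k l r) :
    numSupportMinimal C l > gaussBinom q k l - r := by
  subst hq hk
  by_contra! hM
  rcases hlk.eq_or_lt with rfl | hl
  · have : 0 < numSupportMinimal C (finrank F C) :=
      Nat.card_pos_iff.mpr ⟨⟨⟨C, isSupportMinimal_self⟩⟩, inferInstance⟩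
    rw [gaussBinom_self Fintype.one_lt_card] at hM
    omega
  · obtain ⟨D, hDinj, hD⟩ :=
      exists_injective_not_isSupportMinimal (C := C) (l := l) (r := r) (by omega)
    have := alphaL_le_gaussBinom_one_sub hproj rfl D hDinj hD
    have := hproj.le_gaussBinom_one
    have := gaussBinom_one_le_gaussBinom F hl1 hl
    omega
end

section
/- Let C be an [n,k]_q linear code containing a codeword of Hamming weight 1, say with support {i}. Let C' be the code obtained from C by deleting coordinate i (puncturing at i). Then C' has effective length n − 1 and M(C') = M(C) − 1. -/
open scoped Classical
open Matrix

/-!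
If a minimal codeword `w` of `C` has `w i ≠ 0`, the weight-one word `c` with support `{i}` lies
under it, and a minimal codeword is proportional to every codeword supported inside its support:
so the multiples of `c` form exactly one class of minimal codewords. Every word of `C` is cleared
at `i` by subtracting a multiple of `c`, so inserting a zero at `i` maps the punctured code onto
the words of `C` vanishing at `i`, with supports matching under `i.succAbove`; hence the other
classes of minimal codewords of `C` correspond to those of the punctured code. The same
proportionality leaves at most one class per support, so the counts are finite over any field.
-/

section MinimalCodewords

variable {F : Type} [Field F] {n : ℕ}

lemma wordSupp_eq_empty_iff {c : Fin n → F} : wordSupp c = ∅ ↔ c = 0 := by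
  simp [Set.eq_empty_iff_forall_notMem, wordSupp, funext_iff]

lemma wordSupp_units_smul (a : Fˣ) (c : Fin n → F) : wordSupp (a • c) = wordSupp c := by
  ext j
  simp [wordSupp, Units.smul_def]

lemma isMinimalCodeword_of_wordSupp_eq_singleton {C : Submodule F (Fin n → F)}
    {c : Fin n → F} {i : Fin n} (hc : c ∈ C) (hsupp : wordSupp c = {i}) :
    IsMinimalCodeword C c := by
  refine ⟨hc, fun h => by simp [h, wordSupp_eq_empty_iff.mpr rfl] at hsupp, ?_⟩
  intro c' _ hc' hss
  rw [hsupp, Set.ssubset_singleton_iff, wordSupp_eq_empty_iff] at hss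
  exact hc' hss

lemma IsMinimalCodeword.exists_smul_eq_of_wordSupp_subset {C : Submodule F (Fin n → F)}
    {w v : Fin n → F} (hw : IsMinimalCodeword C w) (hv : v ∈ C)
    (hsub : wordSupp v ⊆ wordSupp w) : ∃ a : F, a • w = v := by
  by_cases hv0 : v = 0
  · exact ⟨0, by simp [hv0]⟩
  obtain ⟨j, hj⟩ : (wordSupp v).Nonempty :=
    Set.nonempty_iff_ne_empty.mpr (mt wordSupp_eq_empty_iff.mp hv0)
  have hwj : w j ≠ 0 := hsub hj
  set u := v - (v j / w j) • w
  -- `u` is supported inside `supp w` but vanishes at `j`, so minimality kills it.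
  have hu_ss : wordSupp u ⊂ wordSupp w := by
    refine Set.ssubset_iff_of_subset (fun k hk => ?_) |>.mpr ⟨j, hwj, ?_⟩
    · by_contra hwk
      exact hk (by simp [u, show v k = 0 from not_not.mp (mt (@hsub k) hwk),
        show w k = 0 from not_not.mp hwk])
    · simp [wordSupp, u, hwj]
  have hu : u = 0 := by
    by_contra hu
    exact hw.2.2 u (C.sub_mem hv (C.smul_mem _ hw.1)) hu hu_ss
  exact ⟨v j / w j, (sub_eq_zero.mp hu).symm⟩

abbrev MinimalCodewordClass (C : Submodule F (Fin n → F)) :=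
  Quot (fun c c' : {c : Fin n → F // IsMinimalCodeword C c} => ∃ a : Fˣ, a • c.1 = c'.1)

variable {C : Submodule F (Fin n → F)}

lemma MinimalCodewordClass.mk_eq_mk_iff {w w' : {c : Fin n → F // IsMinimalCodeword C c}} :
    (Quot.mk _ w : MinimalCodewordClass C) = Quot.mk _ w' ↔ ∃ a : Fˣ, a • w.1 = w'.1 := by
  have hequiv : Equivalence
      (fun c c' : {c : Fin n → F // IsMinimalCodeword C c} => ∃ a : Fˣ, a • c.1 = c'.1) :=
    { refl := fun _ => ⟨1, one_smul _ _⟩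
      symm := fun ⟨a, ha⟩ => ⟨a⁻¹, by rw [← ha, inv_smul_smul]⟩
      trans := fun ⟨a, ha⟩ ⟨b, hb⟩ => ⟨b * a, by rw [mul_smul, ha, hb]⟩ }
  exact ⟨fun h => hequiv.eqvGen_iff.mp (Quot.eqvGen_exact h), fun h => Quot.sound h⟩

lemma MinimalCodewordClass.mk_eq_mk_of_wordSupp_subset
    {w w' : {c : Fin n → F // IsMinimalCodeword C c}} (h : wordSupp w.1 ⊆ wordSupp w'.1) :
    (Quot.mk _ w : MinimalCodewordClass C) = Quot.mk _ w' := by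
  obtain ⟨a, ha⟩ := w'.2.exists_smul_eq_of_wordSupp_subset w.2.1 h
  have ha0 : a ≠ 0 := by
    rintro rfl
    exact w.2.2.1 (by simp [← ha])
  exact (MinimalCodewordClass.mk_eq_mk_iff.mpr ⟨Units.mk0 a ha0, ha⟩).symm

instance MinimalCodewordClass.finite : Finite (MinimalCodewordClass C) := by
  refine Finite.of_injective
    (Quot.lift (fun w => wordSupp w.1) fun _ _ ⟨a, ha⟩ => by rw [← ha, wordSupp_units_smul]) ?_
  rintro ⟨w⟩ ⟨w'⟩ h
  exact MinimalCodewordClass.mk_eq_mk_of_wordSupp_subset h.le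

end MinimalCodewords

section Puncture

variable {F : Type} [Field F] {n : ℕ}

lemma subcodeSupp_map_funLeft {m : ℕ} (C : Submodule F (Fin m → F)) (f : Fin n → Fin m) :
    subcodeSupp (C.map (LinearMap.funLeft F F f)) = f ⁻¹' subcodeSupp C := by
  ext j
  simp only [subcodeSupp, Submodule.mem_map, Set.mem_preimage]
  constructor
  · rintro ⟨_, ⟨v, hv, rfl⟩, hj⟩
    exact ⟨v, hv, hj⟩
  · rintro ⟨v, hv, hj⟩
    exact ⟨_, ⟨v, hv, rfl⟩, hj⟩

lemma wordSupp_insertNth_zero (i : Fin (n + 1)) (w : Fin n → F) :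
    wordSupp (Fin.insertNth i 0 w) = i.succAbove '' wordSupp w := by
  ext j
  induction j using Fin.succAboveCases i with
  | x => simp [wordSupp, Fin.succAbove_ne]
  | p k => simp [wordSupp, Fin.succAbove_right_injective.mem_set_image]

lemma insertNth_zero_smul (i : Fin (n + 1)) (a : F) (w : Fin n → F) :
    Fin.insertNth i 0 (a • w) = a • Fin.insertNth i 0 w := by
  ext j
  induction j using Fin.succAboveCases i <;> simp

variable {C : Submodule F (Fin (n + 1) → F)} {i : Fin (n + 1)} {c : Fin (n + 1) → F}

lemma insertNth_zero_mem_of_mem_map (hc : c ∈ C) (hsupp : wordSupp c = {i})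
    {w : Fin n → F} (hw : w ∈ C.map (LinearMap.funLeft F F i.succAbove)) :
    Fin.insertNth i 0 w ∈ C := by
  obtain ⟨v, hv, rfl⟩ := hw
  have hci : c i ≠ 0 := show i ∈ wordSupp c from hsupp ▸ rfl
  have hc_succAbove (k : Fin n) : c (i.succAbove k) = 0 := by
    by_contra h
    exact Fin.succAbove_ne i k (show i.succAbove k ∈ ({i} : Set _) from hsupp ▸ h)
  -- the lift is `v` with its `i`-th coordinate cleared by a multiple of `c`
  convert C.sub_mem hv (C.smul_mem (v i / c i) hc) using 1
  ext j
  induction j using Fin.succAboveCases i with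
  | x => simp [hci]
  | p k => simp [hc_succAbove, LinearMap.funLeft_apply]

lemma isMinimalCodeword_insertNth_zero_iff (hc : c ∈ C) (hsupp : wordSupp c = {i})
    {w : Fin n → F} :
    IsMinimalCodeword C (Fin.insertNth i 0 w) ↔
      IsMinimalCodeword (C.map (LinearMap.funLeft F F i.succAbove)) w := by
  have image_ssubset_image_iff (s t : Set (Fin n)) :
      i.succAbove '' s ⊂ i.succAbove '' t ↔ s ⊂ t :=
    Fin.succAbove_right_injective.injOn.image_ssubset_image_iff (Set.subset_univ _)
      (Set.subset_univ _)
  have insertNth_eq_zero {u : Fin n → F} : Fin.insertNth (α := fun _ => F) i 0 u = 0 ↔ u = 0 := by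
    refine ⟨fun h => funext fun k => by simpa using congrFun h (i.succAbove k), ?_⟩
    rintro rfl
    simp
  constructor
  · rintro ⟨hwC, hw0, hmin⟩
    refine ⟨⟨_, hwC, by ext; simp [LinearMap.funLeft_apply]⟩, fun h => hw0 (by simp [h]), ?_⟩
    intro v hv hv0 hss
    refine hmin _ (insertNth_zero_mem_of_mem_map hc hsupp hv) (mt insertNth_eq_zero.mp hv0) ?_
    rwa [wordSupp_insertNth_zero, wordSupp_insertNth_zero, image_ssubset_image_iff]
  · rintro ⟨hwC, hw0, hmin⟩
    refine ⟨insertNth_zero_mem_of_mem_map hc hsupp hwC, mt insertNth_eq_zero.mp hw0, ?_⟩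
    intro v hv hv0 hss
    have hvi : v i = 0 := by
      by_contra h
      have := hss.subset h
      simp [wordSupp_insertNth_zero, Fin.succAbove_ne] at this
    have hv_eq : Fin.insertNth i 0 (Fin.removeNth i v) = v := hvi ▸ Fin.insertNth_self_removeNth i v
    refine hmin (Fin.removeNth i v) ⟨v, hv, rfl⟩ (fun h => hv0 (by rw [← hv_eq, h]; simp)) ?_
    rwa [← hv_eq, wordSupp_insertNth_zero, wordSupp_insertNth_zero,
      image_ssubset_image_iff] at hss

def MinimalCodewordClass.insertNth (hc : c ∈ C) (hsupp : wordSupp c = {i}) :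
    Option (MinimalCodewordClass (C.map (LinearMap.funLeft F F i.succAbove))) →
      MinimalCodewordClass C
  | none => Quot.mk _ ⟨c, isMinimalCodeword_of_wordSupp_eq_singleton hc hsupp⟩
  | some q => Quot.map
      (fun w => ⟨Fin.insertNth i 0 w.1, (isMinimalCodeword_insertNth_zero_iff hc hsupp).mpr w.2⟩)
      (fun _ _ ⟨a, ha⟩ => ⟨a, by rw [Units.smul_def, ← insertNth_zero_smul, ← Units.smul_def, ha]⟩)
      q

lemma MinimalCodewordClass.insertNth_injective (hc : c ∈ C) (hsupp : wordSupp c = {i}) :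
    Function.Injective (MinimalCodewordClass.insertNth hc hsupp) := by
  have hci : c i ≠ 0 := show i ∈ wordSupp c from hsupp ▸ rfl
  have not_mk_c_eq_mk_insertNth (w) :
      ¬ MinimalCodewordClass.insertNth hc hsupp none =
        MinimalCodewordClass.insertNth hc hsupp (some (Quot.mk _ w)) := by
    intro h
    obtain ⟨a, ha⟩ := MinimalCodewordClass.mk_eq_mk_iff.mp h
    exact hci (by simpa [Units.smul_def] using congrFun ha i)
  rintro (_ | ⟨⟨w⟩⟩) (_ | ⟨⟨w'⟩⟩) h
  · rfl
  · exact (not_mk_c_eq_mk_insertNth w' h).elim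
  · exact (not_mk_c_eq_mk_insertNth w h.symm).elim
  · obtain ⟨a, ha⟩ := MinimalCodewordClass.mk_eq_mk_iff.mp h
    refine congrArg some (MinimalCodewordClass.mk_eq_mk_iff.mpr ⟨a, funext fun k => ?_⟩)
    simpa [Units.smul_def] using congrFun ha (i.succAbove k)

lemma MinimalCodewordClass.insertNth_surjective (hc : c ∈ C) (hsupp : wordSupp c = {i}) :
    Function.Surjective (MinimalCodewordClass.insertNth hc hsupp) := by
  rintro ⟨w⟩
  by_cases hwi : w.1 i = 0
  · have hw_eq : Fin.insertNth i 0 (Fin.removeNth i w.1) = w.1 :=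
      hwi ▸ Fin.insertNth_self_removeNth i w.1
    refine ⟨some (Quot.mk _ ⟨Fin.removeNth i w.1, ?_⟩), congrArg _ (Subtype.ext hw_eq)⟩
    exact (isMinimalCodeword_insertNth_zero_iff hc hsupp).mp (by rw [hw_eq]; exact w.2)
  · refine ⟨none, MinimalCodewordClass.mk_eq_mk_of_wordSupp_subset ?_⟩
    exact hsupp ▸ Set.singleton_subset_iff.mpr hwi

theorem numMinimal_eq_numMinimal_map_add_one (hc : c ∈ C) (hsupp : wordSupp c = {i}) :
    numMinimal C = numMinimal (C.map (LinearMap.funLeft F F i.succAbove)) + 1 := by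
  rw [numMinimal, numMinimal, ← Finite.card_option]
  exact (Nat.card_congr (Equiv.ofBijective _ ⟨MinimalCodewordClass.insertNth_injective hc hsupp,
    MinimalCodewordClass.insertNth_surjective hc hsupp⟩)).symm

end Puncture

theorem statement_16_general {F : Type} [Field F] {n : ℕ}
    (C : Submodule F (Fin (n + 1) → F))
    (heff : subcodeSupp C = Set.univ)
    (i : Fin (n + 1)) (c : Fin (n + 1) → F) (hc : c ∈ C) (hsupp : wordSupp c = {i}) :
    (subcodeSupp (Submodule.map (LinearMap.funLeft F F i.succAbove) C)).ncard = n ∧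
    numMinimal C = numMinimal (Submodule.map (LinearMap.funLeft F F i.succAbove) C) + 1 := by
  refine ⟨?_, numMinimal_eq_numMinimal_map_add_one hc hsupp⟩
  rw [subcodeSupp_map_funLeft, heff, Set.preimage_univ, Set.ncard_univ, Nat.card_eq_fintype_card,
    Fintype.card_fin]

/-- if an `[n+1,k]_q` code `C` of full effective length contains a codeword
of weight 1 with support `{i}`, then the code `C'` obtained by puncturing at `i` has
effective length `n` and `M(C') = M(C) - 1`. -/
theorem statement_16 {F : Type} [Field F] [Fintype F] {n k : ℕ}
    (C : Submodule F (Fin (n + 1) → F)) (hk : Module.finrank F C = k)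
    (heff : subcodeSupp C = Set.univ)
    (i : Fin (n + 1)) (c : Fin (n + 1) → F) (hc : c ∈ C) (hsupp : wordSupp c = {i}) :
    (subcodeSupp (Submodule.map (LinearMap.funLeft F F i.succAbove) C)).ncard = n ∧
    numMinimal C = numMinimal (Submodule.map (LinearMap.funLeft F F i.succAbove) C) + 1 :=
  statement_16_general C heff i c hc hsupp
end

section
/- Let C be the k-th order q-ary Simplex code, i.e., the [ (q^k−1)/(q−1), k ]_q code whose generator matrix has as columns exactly one nonzero representative of each 1-dimensional subspace of 𝔽_q^k. Then for every 1 ≤ l ≤ k, every l-dimensional subcode of C is support-minimal, and all l-dimensional subcodes of C have the same weight. -/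
/-!
Every `l`-dimensional subcode of the simplex code is `D = V G` for an `l`-dimensional `V ≤ F^k`,
and coordinate `i` lies outside `supp D` exactly when the `i`-th column of `G` is orthogonal to
`V`. The orthogonal complement of `V` has dimension `k - l`, and the columns represent each point
of the projective space once, so exactly `(q^(k-l) - 1)/(q - 1)` coordinates lie outside `supp D`,
whatever `D` is. Hence all `l`-dimensional subcodes have the same weight, and none has support
properly contained in that of another.
-/

open scoped Classical
open Matrix

open Module Projectivization
open LinearMap (BilinForm)
open scoped LinearAlgebra.Projectivization

namespace Projectivization

variable {K V : Type*} [DivisionRing K] [AddCommGroup V] [Module K V]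

theorem range_map_subtype (W : Submodule K V) :
    Set.range (map W.subtype W.injective_subtype) = {p : ℙ K V | p.submodule ≤ W} := by
  ext p
  induction p using ind with | h v hv =>
  simp only [Set.mem_range, Set.mem_ofPred_eq, submodule_mk, Submodule.span_singleton_le_iff_mem]
  constructor
  · rintro ⟨p, hp⟩
    induction p using ind with | h w hw =>
    obtain ⟨a, rfl⟩ := (mk_eq_mk_iff' K _ _ hv _).mp hp.symm
    exact W.smul_mem a w.2
  · intro hvW
    exact ⟨mk K ⟨v, hvW⟩ (by simpa using hv), rfl⟩

theorem card_submodule_le (W : Submodule K V) :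
    Nat.card {p : ℙ K V // p.submodule ≤ W} = Nat.card (ℙ K W) := by
  rw [← Set.coe_ofPred, ← range_map_subtype, Nat.card_range_of_injective (map_injective _ _)]

end Projectivization

theorem Matrix.nondegenerate_dotProductBilin {F m : Type*} [Field F] [Fintype m] :
    (dotProductBilin F F : BilinForm F (m → F)).Nondegenerate :=
  ⟨fun v hv => dotProduct_eq_zero v hv,
    fun w hw => dotProduct_eq_zero w fun v => by rw [dotProduct_comm]; exact hw v⟩

theorem isSupportMinimal_of_forall_ncard_eq {F : Type} [Field F] {n l : ℕ}
    {C D : Submodule F (Fin n → F)} (hD : D ≤ C) (hDl : finrank F D = l)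
    (hconst : ∀ D' ≤ C, finrank F D' = l → (subcodeSupp D').ncard = (subcodeSupp D).ncard) :
    IsSupportMinimal C D l :=
  ⟨hD, hDl, fun D' hD' hD'l hlt =>
    (Set.ncard_lt_ncard hlt (Set.toFinite _)).ne (hconst D' hD' hD'l)⟩

namespace Matrix

variable {F : Type} [Field F] {k n : ℕ} (G : Matrix (Fin k) (Fin n) F)

theorem notMem_subcodeSupp_map_vecMulLinear_iff (V : Submodule F (Fin k → F)) (i : Fin n) :
    i ∉ subcodeSupp (V.map G.vecMulLinear) ↔
      Gᵀ i ∈ BilinForm.orthogonal (dotProductBilin F F) V := by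
  simp [subcodeSupp, vecMul, dotProduct]

theorem vecMulLinear_injective_of_forall_exists_smul
    (hG : ∀ v : Fin k → F, v ≠ 0 → ∃ i, ∃ a : F, a ≠ 0 ∧ Gᵀ i = a • v) :
    Function.Injective G.vecMulLinear := by
  refine (injective_iff_map_eq_zero _).mpr fun u hu => dotProduct_eq_zero u fun w => ?_
  rcases eq_or_ne w 0 with rfl | hw
  · exact dotProduct_zero u
  obtain ⟨i, a, ha, hi⟩ := hG w hw
  have : u ⬝ᵥ Gᵀ i = 0 := congrFun hu i
  rwa [hi, dotProduct_smul, smul_eq_mul, mul_eq_zero, or_iff_right ha] at this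

variable (hcols : ∀ i, Gᵀ i ≠ 0)
  (hrep : ∀ v : Fin k → F, v ≠ 0 → ∃! i, ∃ a : F, a ≠ 0 ∧ Gᵀ i = a • v)
include hcols hrep

theorem bijective_mk_transpose : Function.Bijective fun i => mk F (Gᵀ i) (hcols i) := by
  constructor
  · intro i j hij
    obtain ⟨a, ha⟩ := (mk_eq_mk_iff F _ _ (hcols i) (hcols j)).mp hij
    exact (hrep _ (hcols j)).unique ⟨a, a.ne_zero, ha.symm⟩
      ⟨1, one_ne_zero, (one_smul F _).symm⟩
  · intro p
    induction p using ind with | h v hv =>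
    obtain ⟨i, ⟨a, ha, hi⟩, -⟩ := hrep v hv
    exact ⟨i, (mk_eq_mk_iff' F _ _ _ hv).mpr ⟨a, hi.symm⟩⟩

theorem card_transpose_mem [Finite F] (W : Submodule F (Fin k → F)) :
    Nat.card {i // Gᵀ i ∈ W} = ∑ j ∈ Finset.range (finrank F W), Nat.card F ^ j :=
  calc Nat.card {i // Gᵀ i ∈ W}
      = Nat.card {p : ℙ F (Fin k → F) // p.submodule ≤ W} :=
        Nat.card_congr <| (Equiv.ofBijective _ (bijective_mk_transpose G hcols hrep)).subtypeEquiv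
          fun i => by simp [Submodule.span_singleton_le_iff_mem]
    _ = Nat.card (ℙ F W) := card_submodule_le W
    _ = _ := card_of_finrank F W rfl

theorem ncard_subcodeSupp_add_of_le_range [Finite F] {D : Submodule F (Fin n → F)}
    (hD : D ≤ LinearMap.range G.vecMulLinear) :
    (subcodeSupp D).ncard + ∑ j ∈ Finset.range (k - finrank F D), Nat.card F ^ j = n := by
  set V := D.comap G.vecMulLinear
  have hVD : V.map G.vecMulLinear = D := Submodule.map_comap_eq_of_le hD
  have hinj := vecMulLinear_injective_of_forall_exists_smul G fun v hv => (hrep v hv).exists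
  have hV : finrank F V = finrank F D := by
    rw [← hVD, LinearEquiv.finrank_eq (Submodule.equivMapOfInjective _ hinj V)]
  have hcompl :
      (subcodeSupp D)ᶜ = {i | Gᵀ i ∈ BilinForm.orthogonal (dotProductBilin F F) V} := by
    ext i
    rw [← hVD]
    exact notMem_subcodeSupp_map_vecMulLinear_iff G V i
  have horth : finrank F (BilinForm.orthogonal (dotProductBilin F F) V) = k - finrank F D := by
    rw [BilinForm.finrank_orthogonal nondegenerate_dotProductBilin, finrank_fin_fun, hV]
  calc (subcodeSupp D).ncard + ∑ j ∈ Finset.range (k - finrank F D), Nat.card F ^ j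
      = (subcodeSupp D).ncard + (subcodeSupp D)ᶜ.ncard := by
        rw [← horth, ← card_transpose_mem G hcols hrep, hcompl]
        rfl
    _ = n := by rw [Set.ncard_add_ncard_compl, Nat.card_fin]

theorem ncard_subcodeSupp_eq_of_finrank_eq [Finite F] {D D' : Submodule F (Fin n → F)}
    (hD : D ≤ LinearMap.range G.vecMulLinear) (hD' : D' ≤ LinearMap.range G.vecMulLinear)
    (h : finrank F D = finrank F D') : (subcodeSupp D).ncard = (subcodeSupp D').ncard := by
  have hw := ncard_subcodeSupp_add_of_le_range G hcols hrep hD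
  have hw' := ncard_subcodeSupp_add_of_le_range G hcols hrep hD'
  rw [h] at hw
  omega

end Matrix

theorem statement_17_general {F : Type} [Field F] [Fintype F] {q k : ℕ}
    (G : Matrix (Fin k) (Fin ((q ^ k - 1) / (q - 1))) F)
    (hcols : ∀ i, Gᵀ i ≠ 0)
    (hrep : ∀ v : Fin k → F, v ≠ 0 → ∃! i, ∃ a : F, a ≠ 0 ∧ Gᵀ i = a • v)
    (l : ℕ) :
    (∀ D : Submodule F (Fin ((q ^ k - 1) / (q - 1)) → F),
      D ≤ LinearMap.range G.vecMulLinear → Module.finrank F D = l →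
      IsSupportMinimal (LinearMap.range G.vecMulLinear) D l) ∧
    (∀ D D' : Submodule F (Fin ((q ^ k - 1) / (q - 1)) → F),
      D ≤ LinearMap.range G.vecMulLinear → D' ≤ LinearMap.range G.vecMulLinear →
      Module.finrank F D = l → Module.finrank F D' = l →
      (subcodeSupp D).ncard = (subcodeSupp D').ncard) := by
  have hconst := fun (D D' : Submodule F _) hD hD' (hDl : finrank F D = l)
      (hD'l : finrank F D' = l) =>
    G.ncard_subcodeSupp_eq_of_finrank_eq hcols hrep hD hD' (hDl.trans hD'l.symm)
  exact ⟨fun D hD hDl => isSupportMinimal_of_forall_ncard_eq hD hDl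
    fun D' hD' hD'l => hconst D' D hD' hD hD'l hDl, hconst⟩

/-- for the `k`-th order `q`-ary Simplex code (whose generator matrix has
as columns exactly one nonzero representative of each 1-dimensional subspace of `F^k`),
for every `1 ≤ l ≤ k` all `l`-dimensional subcodes are support-minimal and have the same
weight. -/
theorem statement_17 {F : Type} [Field F] [Fintype F] {q k : ℕ}
    (hq : Fintype.card F = q) (hk : 1 ≤ k)
    (G : Matrix (Fin k) (Fin ((q ^ k - 1) / (q - 1))) F)
    (hcols : ∀ i, Gᵀ i ≠ 0)
    (hrep : ∀ v : Fin k → F, v ≠ 0 → ∃! i, ∃ a : F, a ≠ 0 ∧ Gᵀ i = a • v)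
    (l : ℕ) (hl1 : 1 ≤ l) (hlk : l ≤ k) :
    (∀ D : Submodule F (Fin ((q ^ k - 1) / (q - 1)) → F),
      D ≤ LinearMap.range G.vecMulLinear → Module.finrank F D = l →
      IsSupportMinimal (LinearMap.range G.vecMulLinear) D l) ∧
    (∀ D D' : Submodule F (Fin ((q ^ k - 1) / (q - 1)) → F),
      D ≤ LinearMap.range G.vecMulLinear → D' ≤ LinearMap.range G.vecMulLinear →
      Module.finrank F D = l → Module.finrank F D' = l →
      (subcodeSupp D).ncard = (subcodeSupp D').ncard) :=
  statement_17_general G hcols hrep l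
end
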